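/- arXiv:1311.4830 — 8 statements merged into one kernel-verified Lean document; each statement's English description precedes it below -/
import Mathlib

section
/- Fix β > 0 and L ≥ 1. For each N let K = ⌊βN⌋, let π_1,…,π_K be i.i.d. uniform on {1,…,N} with occupancy counts ν_i = #{k ≤ K : π_k = i}, and set m_L(N) = (1/N)·Σ_{i=1}^N ν_i^L (the L-th empirical spectral moment of SSᵀ for a TH matrix with N_s = 1). Then m_L(N) converges in probability, as N → ∞, to the L-th moment of a Poisson distribution with mean β, namely m̄_L = Σ_{ℓ=1}^{L} S(L,ℓ) β^ℓ; that is, for every ε > 0, P(|m_L(N) − m̄_L| > ε) → 0. -/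
/-- Stirling numbers of the second kind. -/
def stirling2 : ℕ → ℕ → ℕ
  | 0, 0 => 1
  | 0, _ + 1 => 0
  | _ + 1, 0 => 0
  | n + 1, k + 1 => (k + 1) * stirling2 n (k + 1) + stirling2 n k

/-- Occupancy count: the number of draws `k` (out of `K`) with `π k = i`; the `i`-th
diagonal entry (eigenvalue) of the Gram matrix `SSᵀ` of a TH matrix with `N_s = 1`. -/
def occupancy {N K : ℕ} (π : Fin K → Fin N) (i : Fin N) : ℕ :=
  (Finset.univ.filter fun k => π k = i).card

/-- The `L`-th empirical spectral moment `m_L = (1/N)·Σ_{i=1}^N ν_i^L`. -/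
noncomputable def empMoment {N K : ℕ} (L : ℕ) (π : Fin K → Fin N) : ℝ :=
  (1 / (N : ℝ)) * ∑ i : Fin N, (occupancy π i : ℝ) ^ L


/-!
Expanding `n ^ L = ∑ S(L, ℓ) n₍ℓ₎` in falling factorials reduces the moments of the occupancy
counts to factorial moments, which are exact: `E[(ν_i)₍a₎ (ν_j)₍b₎] = K₍a+b₎ / N ^ (a + b)` for
`i ≠ j`, by induction on the number of draws. Hence `E[m_L]` is the `L`-th moment of
`Binomial(K, 1/N)`, which tends to the `L`-th moment of `Poisson(β)`. Distinct cells are negatively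
correlated (`K₍a+b₎ ≤ K₍a₎ K₍b₎`), so `Var m_L ≤ E[ν_i ^ (2L)] / N = O(1/N)`, and Chebyshev's
inequality concludes.
-/
open Finset Filter Topology

theorem stirling2_eq_stirlingSecond : stirling2 = Nat.stirlingSecond := by
  funext n k
  induction n generalizing k with
  | zero => cases k <;> rfl
  | succ n ih => cases k <;> simp [stirling2, Nat.stirlingSecond_succ_succ, ih]

namespace Nat

theorem succ_descFactorial_eq_add (n k : ℕ) :
    (n + 1).descFactorial k = n.descFactorial k + k * n.descFactorial (k - 1) := by
  cases k with
  | zero => simp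
  | succ k =>
    rw [succ_descFactorial_succ, descFactorial_succ, add_tsub_cancel_right]
    rcases le_or_gt k n with h | h
    · have : n + 1 = (n - k) + (k + 1) := by omega
      rw [this, add_mul]
    · simp [descFactorial_eq_zero_iff_lt.mpr h]

theorem mul_descFactorial_eq_add (n k : ℕ) :
    n * n.descFactorial k = n.descFactorial (k + 1) + k * n.descFactorial k := by
  rw [descFactorial_succ, ← add_mul]
  rcases le_or_gt k n with h | h
  · rw [Nat.sub_add_cancel h]
  · simp [descFactorial_eq_zero_iff_lt.mpr h]

theorem descFactorial_add_le (n a b : ℕ) :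
    n.descFactorial (a + b) ≤ n.descFactorial a * n.descFactorial b := by
  rw [← descFactorial_mul_descFactorial (Nat.le_add_right a b), add_tsub_cancel_left, mul_comm]
  exact Nat.mul_le_mul_left _ (descFactorial_le b (Nat.sub_le n a))

theorem cast_descFactorial_eq_prod_range {R : Type*} [CommRing R] (n k : ℕ) :
    (n.descFactorial k : R) = ∏ i ∈ range k, ((n : R) - i) := by
  induction k with
  | zero => simp
  | succ k ih =>
    rw [prod_range_succ, ← ih, descFactorial_succ, mul_comm]
    rcases le_or_gt k n with h | h
    · push_cast [h]; ring
    · simp [descFactorial_eq_zero_iff_lt.mpr h]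

theorem pow_eq_sum_stirlingSecond_mul_descFactorial (n L : ℕ) :
    n ^ L = ∑ k ∈ range (L + 1), L.stirlingSecond k * n.descFactorial k := by
  induction L with
  | zero => simp
  | succ L ih =>
    have shift : ∑ k ∈ range (L + 1), k * L.stirlingSecond k * n.descFactorial k
        = ∑ k ∈ range (L + 1), (k + 1) * L.stirlingSecond (k + 1) * n.descFactorial (k + 1) := by
      have h := sum_range_succ' (fun k => k * L.stirlingSecond k * n.descFactorial k) (L + 1)
      rw [sum_range_succ, stirlingSecond_eq_zero_of_lt (Nat.lt_succ_self L)] at h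
      simpa using h
    rw [sum_range_succ', stirlingSecond_succ_zero, zero_mul, add_zero, pow_succ, ih, sum_mul]
    simp only [stirlingSecond_succ_succ, add_mul _ _ (n.descFactorial _)]
    rw [sum_add_distrib, ← shift, ← sum_add_distrib]
    refine sum_congr rfl fun k _ => ?_
    rw [mul_assoc, mul_comm _ n, mul_descFactorial_eq_add]
    ring

end Nat

theorem Fintype.sum_fun_fin_succ {α M : Type*} [Fintype α] [AddCommMonoid M] {K : ℕ}
    (F : (Fin (K + 1) → α) → M) :
    ∑ π, F π = ∑ π : Fin K → α, ∑ x : α, F (Fin.cons x π) := by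
  rw [← (Fin.consEquiv fun _ => α).sum_comp F, Fintype.sum_prod_type, sum_comm]
  rfl

section Occupancy

variable {N K : ℕ}

theorem occupancy_cons (x : Fin N) (π : Fin K → Fin N) (i : Fin N) :
    occupancy (Fin.cons x π : Fin (K + 1) → Fin N) i = occupancy π i + if x = i then 1 else 0 := by
  simp only [occupancy, card_filter, Fin.sum_univ_succ, Fin.cons_zero, Fin.cons_succ]
  ring

theorem sum_descFactorial_add_ite_mul {ι : Type*} [Fintype ι] [DecidableEq ι] (i j : ι)
    (hij : i ≠ j) (n m a b : ℕ) :
    ∑ x : ι, (n + if x = i then 1 else 0).descFactorial a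
        * (m + if x = j then 1 else 0).descFactorial b
      = Fintype.card ι * (n.descFactorial a * m.descFactorial b)
        + a * (n.descFactorial (a - 1) * m.descFactorial b)
        + b * (n.descFactorial a * m.descFactorial (b - 1)) := by
  have pointwise : ∀ x : ι, (n + if x = i then 1 else 0).descFactorial a
        * (m + if x = j then 1 else 0).descFactorial b
      = n.descFactorial a * m.descFactorial b
        + (if x = i then a * (n.descFactorial (a - 1) * m.descFactorial b) else 0)
        + (if x = j then b * (n.descFactorial a * m.descFactorial (b - 1)) else 0) := by
    intro x
    by_cases hxi : x = i
    · subst hxi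
      simp only [↓reduceIte, Nat.succ_descFactorial_eq_add, hij, add_zero]
      ring
    by_cases hxj : x = j
    · subst hxj
      simp only [hxi, ↓reduceIte, add_zero, Nat.succ_descFactorial_eq_add]
      ring
    simp [hxi, hxj]
  simp only [pointwise, sum_add_distrib, sum_const, card_univ, smul_eq_mul, sum_ite_eq', mem_univ,
    if_true]

theorem sum_descFactorial_occupancy_mul_descFactorial (i j : Fin N) (hij : i ≠ j) (a b : ℕ) :
    (∑ π : Fin K → Fin N, (occupancy π i).descFactorial a * (occupancy π j).descFactorial b)
        * N ^ (a + b) = K.descFactorial (a + b) * N ^ K := by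
  induction K generalizing a b with
  | zero =>
    rcases a with _ | a <;> rcases b with _ | b <;>
      simp [occupancy, ← add_assoc]
  | succ K ih =>
    set F := fun a b => ∑ π : Fin K → Fin N,
      (occupancy π i).descFactorial a * (occupancy π j).descFactorial b
    have hF : ∀ a b, F a b * N ^ (a + b) = K.descFactorial (a + b) * N ^ K := ih
    have term_a : ∀ a b,
        a * F (a - 1) b * N ^ (a + b) = a * K.descFactorial (a + b - 1) * N ^ (K + 1) := by
      rintro (_ | a) b
      · simp
      · rw [add_tsub_cancel_right, show a + 1 + b - 1 = a + b by omega,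
          show a + 1 + b = a + b + 1 by omega, pow_succ, pow_succ,
          show (a + 1) * F a b * (N ^ (a + b) * N) = (a + 1) * (F a b * N ^ (a + b)) * N by ring,
          hF]
        ring
    have term_b : ∀ a b,
        b * F a (b - 1) * N ^ (a + b) = b * K.descFactorial (a + b - 1) * N ^ (K + 1) := by
      rintro a (_ | b)
      · simp
      · rw [add_tsub_cancel_right, show a + (b + 1) - 1 = a + b by omega, ← add_assoc,
          pow_succ, pow_succ,
          show (b + 1) * F a b * (N ^ (a + b) * N) = (b + 1) * (F a b * N ^ (a + b)) * N by ring,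
          hF]
        ring
    rw [Fintype.sum_fun_fin_succ]
    simp only [occupancy_cons, sum_descFactorial_add_ite_mul i j hij, Fintype.card_fin,
      sum_add_distrib, ← mul_sum]
    change (N * F a b + a * F (a - 1) b + b * F a (b - 1)) * N ^ (a + b) = _
    rw [add_mul, add_mul, mul_assoc, hF, term_a, term_b, Nat.succ_descFactorial_eq_add]
    ring

end Occupancy

/-- `binomialMoment L K p = E[X^L]` for `X ~ Binomial(K, p)`. -/
noncomputable def binomialMoment (L K : ℕ) (p : ℝ) : ℝ :=
  ∑ ℓ ∈ range (L + 1), (L.stirlingSecond ℓ : ℝ) * K.descFactorial ℓ * p ^ ℓ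

/-- `poissonMoment L t = E[X^L]` for `X ~ Poisson(t)`. -/
noncomputable def poissonMoment (L : ℕ) (t : ℝ) : ℝ :=
  ∑ ℓ ∈ range (L + 1), (L.stirlingSecond ℓ : ℝ) * t ^ ℓ

theorem cast_pow_eq_sum_stirlingSecond_mul_descFactorial (n L : ℕ) :
    (n : ℝ) ^ L = ∑ ℓ ∈ range (L + 1), (L.stirlingSecond ℓ : ℝ) * n.descFactorial ℓ := by
  exact_mod_cast Nat.pow_eq_sum_stirlingSecond_mul_descFactorial n L

section Occupancy

variable {N K : ℕ}

theorem sum_cast_descFactorial_occupancy_mul_descFactorial (i j : Fin N) (hij : i ≠ j) (a b : ℕ) :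
    ∑ π : Fin K → Fin N, ((occupancy π i).descFactorial a : ℝ) * (occupancy π j).descFactorial b
      = N ^ K * (K.descFactorial (a + b) * (N : ℝ)⁻¹ ^ (a + b)) := by
  have hN : (N : ℝ) ≠ 0 := by exact_mod_cast (i.pos).ne'
  have h : (∑ π : Fin K → Fin N,
      ((occupancy π i).descFactorial a : ℝ) * (occupancy π j).descFactorial b) * N ^ (a + b)
        = K.descFactorial (a + b) * N ^ K := by
    exact_mod_cast sum_descFactorial_occupancy_mul_descFactorial i j hij a b
  rw [inv_pow, ← div_eq_mul_inv, mul_div_assoc', eq_div_iff (pow_ne_zero _ hN), h, mul_comm]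

theorem sum_occupancy_pow (hN : 1 < N) (i : Fin N) (L : ℕ) :
    ∑ π : Fin K → Fin N, (occupancy π i : ℝ) ^ L = N ^ K * binomialMoment L K (N : ℝ)⁻¹ := by
  obtain ⟨j, hji⟩ := Fintype.exists_ne_of_one_lt_card (by simpa using hN) i
  have single : ∀ ℓ, ∑ π : Fin K → Fin N, ((occupancy π i).descFactorial ℓ : ℝ)
      = N ^ K * (K.descFactorial ℓ * (N : ℝ)⁻¹ ^ ℓ) := by
    intro ℓ
    simpa using sum_cast_descFactorial_occupancy_mul_descFactorial (K := K) i j hji.symm ℓ 0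
  simp only [fun π : Fin K → Fin N =>
    cast_pow_eq_sum_stirlingSecond_mul_descFactorial (occupancy π i) L]
  rw [sum_comm, binomialMoment, mul_sum]
  refine sum_congr rfl fun ℓ _ => ?_
  rw [← mul_sum, single]
  ring

theorem sum_occupancy_pow_mul_pow_le (i j : Fin N) (hij : i ≠ j) (L : ℕ) :
    ∑ π : Fin K → Fin N, (occupancy π i : ℝ) ^ L * (occupancy π j : ℝ) ^ L
      ≤ N ^ K * binomialMoment L K (N : ℝ)⁻¹ ^ 2 := by
  calc ∑ π : Fin K → Fin N, (occupancy π i : ℝ) ^ L * (occupancy π j : ℝ) ^ L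
      = ∑ a ∈ range (L + 1), ∑ b ∈ range (L + 1), (L.stirlingSecond a : ℝ) * L.stirlingSecond b
          * (N ^ K * (K.descFactorial (a + b) * (N : ℝ)⁻¹ ^ (a + b))) := by
        simp only [fun π : Fin K → Fin N => cast_pow_eq_sum_stirlingSecond_mul_descFactorial
          (occupancy π i) L, fun π : Fin K → Fin N =>
          cast_pow_eq_sum_stirlingSecond_mul_descFactorial (occupancy π j) L, sum_mul_sum]
        rw [sum_comm]
        refine sum_congr rfl fun a _ => ?_
        rw [sum_comm]
        refine sum_congr rfl fun b _ => ?_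
        rw [← sum_cast_descFactorial_occupancy_mul_descFactorial i j hij, mul_sum]
        refine sum_congr rfl fun π _ => ?_
        ring
    _ ≤ ∑ a ∈ range (L + 1), ∑ b ∈ range (L + 1), (L.stirlingSecond a : ℝ) * L.stirlingSecond b
          * (N ^ K * (K.descFactorial a * K.descFactorial b * (N : ℝ)⁻¹ ^ (a + b))) := by
        gcongr with a _ b _
        exact_mod_cast Nat.descFactorial_add_le K a b
    _ = N ^ K * binomialMoment L K (N : ℝ)⁻¹ ^ 2 := by
        rw [binomialMoment, sq, sum_mul_sum, mul_sum]
        refine sum_congr rfl fun a _ => ?_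
        rw [mul_sum]
        refine sum_congr rfl fun b _ => ?_
        ring

end Occupancy

section EmpiricalMoment

variable {N K : ℕ}

theorem sum_empMoment (hN : 1 < N) (L : ℕ) :
    ∑ π : Fin K → Fin N, empMoment L π = N ^ K * binomialMoment L K (N : ℝ)⁻¹ := by
  simp only [empMoment, ← mul_sum]
  rw [sum_comm]
  simp only [sum_occupancy_pow hN, sum_const, card_univ, Fintype.card_fin, nsmul_eq_mul]
  field_simp

theorem sum_empMoment_sq_le (hN : 1 < N) (L : ℕ) :
    ∑ π : Fin K → Fin N, empMoment L π ^ 2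
      ≤ N ^ K * (binomialMoment L K (N : ℝ)⁻¹ ^ 2
        + binomialMoment (2 * L) K (N : ℝ)⁻¹ * (N : ℝ)⁻¹) := by
  classical
  set M₁ := binomialMoment L K (N : ℝ)⁻¹
  set M₂ := binomialMoment (2 * L) K (N : ℝ)⁻¹
  have row_le : ∀ i : Fin N, ∑ j : Fin N, ∑ π : Fin K → Fin N,
      (occupancy π i : ℝ) ^ L * (occupancy π j : ℝ) ^ L ≤ N ^ K * M₂ + N * (N ^ K * M₁ ^ 2) := by
    intro i
    rw [Fintype.sum_eq_add_sum_compl i]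
    gcongr
    · simp only [← pow_add, ← two_mul]
      exact (sum_occupancy_pow hN i (2 * L)).le
    · calc ∑ j ∈ {i}ᶜ, ∑ π : Fin K → Fin N, (occupancy π i : ℝ) ^ L * (occupancy π j : ℝ) ^ L
          ≤ ∑ j ∈ ({i}ᶜ : Finset (Fin N)), (N : ℝ) ^ K * M₁ ^ 2 :=
            sum_le_sum fun j hj => sum_occupancy_pow_mul_pow_le i j (by simpa [eq_comm] using hj) L
        _ ≤ N * (N ^ K * M₁ ^ 2) := by
            rw [sum_const, nsmul_eq_mul]
            gcongr
            exact_mod_cast (card_le_univ _).trans_eq (Fintype.card_fin N)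
  calc ∑ π : Fin K → Fin N, empMoment L π ^ 2
      = (N : ℝ)⁻¹ ^ 2 * ∑ i : Fin N, ∑ j : Fin N, ∑ π : Fin K → Fin N,
          (occupancy π i : ℝ) ^ L * (occupancy π j : ℝ) ^ L := by
        simp only [empMoment, one_div, mul_pow, sq (∑ i : Fin N, _), sum_mul_sum]
        rw [← mul_sum, sum_comm]
        exact congrArg _ (sum_congr rfl fun i _ => sum_comm)
    _ ≤ (N : ℝ)⁻¹ ^ 2 * ∑ _i : Fin N, (N ^ K * M₂ + N * (N ^ K * M₁ ^ 2)) := by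
        gcongr with i
        exact row_le i
    _ = N ^ K * (M₁ ^ 2 + M₂ * (N : ℝ)⁻¹) := by
        rw [sum_const, card_univ, Fintype.card_fin, nsmul_eq_mul]
        field_simp
        ring

theorem sum_sq_empMoment_sub_le (hN : 1 < N) (L : ℕ) (c : ℝ) :
    ∑ π : Fin K → Fin N, (empMoment L π - c) ^ 2
      ≤ N ^ K * ((binomialMoment L K (N : ℝ)⁻¹ - c) ^ 2
        + binomialMoment (2 * L) K (N : ℝ)⁻¹ * (N : ℝ)⁻¹) := by
  have expand : ∑ π : Fin K → Fin N, (empMoment L π - c) ^ 2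
      = ∑ π : Fin K → Fin N, empMoment L π ^ 2 - 2 * c * ∑ π : Fin K → Fin N, empMoment L π
        + N ^ K * c ^ 2 := by
    simp only [sub_sq, sum_add_distrib, sum_sub_distrib, ← mul_sum, ← sum_mul, sum_const,
      card_univ, Fintype.card_fun, Fintype.card_fin, nsmul_eq_mul]
    push_cast
    ring
  rw [expand, sum_empMoment hN]
  linarith [sum_empMoment_sq_le (K := K) hN L]

end EmpiricalMoment

theorem card_lt_abs_sub_mul_sq_le_sum_sq {α : Type*} [Fintype α] (f : α → ℝ) (c : ℝ) {ε : ℝ}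
    (hε : 0 ≤ ε) :
    (Nat.card {x // ε < |f x - c|} : ℝ) * ε ^ 2 ≤ ∑ x, (f x - c) ^ 2 := by
  classical
  rw [Nat.card_eq_fintype_card, Fintype.card_subtype, ← nsmul_eq_mul]
  calc #{x | ε < |f x - c|} • ε ^ 2 ≤ ∑ x ∈ {x | ε < |f x - c|}, (f x - c) ^ 2 := by
        refine card_nsmul_le_sum _ _ _ fun x hx => ?_
        rw [← sq_abs (f x - c)]
        exact pow_le_pow_left₀ hε (mem_filter.mp hx).2.le 2
    _ ≤ ∑ x, (f x - c) ^ 2 :=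
        sum_le_sum_of_subset_of_nonneg (subset_univ _) fun x _ _ => sq_nonneg _

theorem card_empMoment_deviation_div_card_le {N K : ℕ} (hN : 1 < N) (L : ℕ) (c : ℝ) {ε : ℝ}
    (hε : 0 < ε) :
    (Nat.card {π : Fin K → Fin N // ε < |empMoment L π - c|} : ℝ)
        / Fintype.card (Fin K → Fin N)
      ≤ ((binomialMoment L K (N : ℝ)⁻¹ - c) ^ 2
        + binomialMoment (2 * L) K (N : ℝ)⁻¹ * (N : ℝ)⁻¹) / ε ^ 2 := by
  have hcard : (Fintype.card (Fin K → Fin N) : ℝ) = N ^ K := by simp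
  rw [hcard, div_le_div_iff₀ (by positivity) (by positivity), mul_comm _ ((N : ℝ) ^ K)]
  exact (card_lt_abs_sub_mul_sq_le_sum_sq _ c hε.le).trans (sum_sq_empMoment_sub_le hN L c)

theorem tendsto_binomialMoment {ι : Type*} {l : Filter ι} {K : ι → ℕ} {p : ι → ℝ} {t : ℝ}
    (L : ℕ) (hKp : Tendsto (fun n => K n * p n) l (𝓝 t)) (hp : Tendsto p l (𝓝 0)) :
    Tendsto (fun n => binomialMoment L (K n) (p n)) l (𝓝 (poissonMoment L t)) := by
  refine tendsto_finsetSum _ fun ℓ _ => ?_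
  have factorial_term : ∀ n, ((K n).descFactorial ℓ : ℝ) * p n ^ ℓ
      = ∏ s ∈ range ℓ, (K n * p n - s * p n) := fun n => by
    rw [Nat.cast_descFactorial_eq_prod_range, pow_eq_prod_const, ← prod_mul_distrib]
    exact prod_congr rfl fun s _ => by ring
  have hprod : Tendsto (fun n => ∏ s ∈ range ℓ, (K n * p n - s * p n)) l (𝓝 (t ^ ℓ)) := by
    simpa using tendsto_finsetProd (range ℓ) fun s _ => hKp.sub (hp.const_mul (s : ℝ))
  simpa only [mul_assoc, factorial_term] using hprod.const_mul (L.stirlingSecond ℓ : ℝ)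

theorem poissonMoment_eq_sum_Icc {L : ℕ} (hL : 1 ≤ L) (t : ℝ) :
    poissonMoment L t = ∑ ℓ ∈ Icc 1 L, (L.stirlingSecond ℓ : ℝ) * t ^ ℓ := by
  obtain ⟨L, rfl⟩ := Nat.exists_eq_add_of_le' hL
  rw [poissonMoment, range_eq_Ico, sum_eq_sum_Ico_succ_bot (by omega), Nat.stirlingSecond_succ_zero]
  simp [Ico_add_one_right_eq_Icc]

/-- Fix `β > 0` and `L ≥ 1`.  With `K = ⌊βN⌋` i.i.d. uniform draws on
`{1,…,N}` (probabilities computed by uniform counting over all `N^K` outcomes), the `L`-th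
empirical spectral moment of the Gram matrix of a TH matrix with `N_s = 1` converges in
probability, as `N → ∞`, to the `L`-th Poisson(β) moment `m̄_L = Σ_{ℓ=1}^L S(L,ℓ) β^ℓ`:
for every `ε > 0`, `P(|m_L(N) − m̄_L| > ε) → 0`. -/
theorem empirical_spectral_moment_tendsto_poisson_moment
    (β : ℝ) (hβ : 0 < β) (L : ℕ) (hL : 1 ≤ L) (ε : ℝ) (hε : 0 < ε) :
    Filter.Tendsto
      (fun N : ℕ =>
        ((Nat.card {π : Fin ⌊β * (N : ℝ)⌋₊ → Fin N //
            ε < |empMoment L π - ∑ ℓ ∈ Finset.Icc 1 L, (stirling2 L ℓ : ℝ) * β ^ ℓ|} : ℕ) : ℝ) /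
          (Fintype.card (Fin ⌊β * (N : ℝ)⌋₊ → Fin N) : ℝ))
      Filter.atTop (nhds 0) := by
  have hKp : Tendsto (fun N : ℕ => (⌊β * N⌋₊ : ℝ) * (N : ℝ)⁻¹) atTop (𝓝 β) := by
    simpa only [Function.comp_def, div_eq_mul_inv] using
      (tendsto_nat_floor_mul_div_atTop hβ.le).comp tendsto_natCast_atTop_atTop
  have hp : Tendsto (fun N : ℕ => (N : ℝ)⁻¹) atTop (𝓝 0) := tendsto_inv_atTop_nhds_zero_nat
  have hM₁ := tendsto_binomialMoment L hKp hp
  have hM₂ := (tendsto_binomialMoment (2 * L) hKp hp).mul hp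
  have hbound := (((hM₁.sub_const (poissonMoment L β)).pow 2).add hM₂).div_const (ε ^ 2)
  rw [sub_self, mul_zero, zero_pow two_ne_zero, add_zero, zero_div] at hbound
  rw [stirling2_eq_stirlingSecond, ← poissonMoment_eq_sum_Icc hL]
  refine squeeze_zero' (Eventually.of_forall fun N => by positivity) ?_ hbound
  filter_upwards [eventually_gt_atTop 1] with N hN
  exact card_empMoment_deviation_div_card_le hN L _ hε
end

section
/- Fix β > 0 and L ≥ 1. For each N let K = ⌊βN⌋, let π_1,…,π_K be i.i.d. uniform on {1,…,N} with occupancy counts ν_i = #{k ≤ K : π_k = i}, and set m_L(N) = (1/N)·Σ_{i=1}^N ν_i^L. Then the variance of m_L(N) is O(1/N): there is a constant C (depending on β and L only) such that Var[m_L(N)] ≤ C/N for all N ≥ 1. -/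
/-- Expectation of a real random variable on the uniform finite sample space
`Fin K → Fin N` of `K` i.i.d. uniform draws from `{1,…,N}`. -/
noncomputable def expectUnif {N K : ℕ} (f : (Fin K → Fin N) → ℝ) : ℝ :=
  (∑ π : Fin K → Fin N, f π) / (Fintype.card (Fin K → Fin N) : ℝ)

open Finset

section Aux
variable {N K : ℕ}

lemma card_filter_forall (A : Finset (Fin K)) (g : Fin K → Fin N) :
    (Finset.univ.filter fun π : Fin K → Fin N => ∀ a ∈ A, π a = g a).card
      = N ^ (K - A.card) := by
  classical
  rw [← Fintype.card_subtype]
  have e : {π : Fin K → Fin N // ∀ a ∈ A, π a = g a} ≃ ({a // a ∈ Aᶜ} → Fin N) :=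
  { toFun := fun π a => π.1 a.1
    invFun := fun h => ⟨fun a => if ha : a ∈ A then g a else h ⟨a, Finset.mem_compl.2 ha⟩,
      fun a ha => dif_pos ha⟩
    left_inv := fun π => by
      ext a
      by_cases ha : a ∈ A
      · simp [ha, π.2 a ha]
      · simp [ha]
    right_inv := fun h => by
      ext a
      have ha : a.1 ∉ A := Finset.mem_compl.1 a.2
      simp [ha] }
  rw [Fintype.card_congr e, Fintype.card_fun]
  simp [Finset.card_compl]

lemma expectUnif_eq (f : (Fin K → Fin N) → ℝ) :
    expectUnif f = (∑ π : Fin K → Fin N, f π) / (N : ℝ) ^ K := by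
  rw [expectUnif, Fintype.card_fun]
  push_cast
  simp

lemma expectUnif_sum {ι : Type*} (s : Finset ι) (F : ι → (Fin K → Fin N) → ℝ) :
    expectUnif (fun π => ∑ j ∈ s, F j π) = ∑ j ∈ s, expectUnif (F j) := by
  simp only [expectUnif]
  rw [Finset.sum_comm, Finset.sum_div]

lemma expectUnif_const_mul (c : ℝ) (f : (Fin K → Fin N) → ℝ) :
    expectUnif (fun π => c * f π) = c * expectUnif f := by
  simp [expectUnif, ← Finset.mul_sum, mul_div_assoc]

lemma expectUnif_ind (hN : 0 < N) (A : Finset (Fin K)) (g : Fin K → Fin N) :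
    expectUnif (fun π : Fin K → Fin N => if ∀ a ∈ A, π a = g a then (1:ℝ) else 0)
      = ((N : ℝ)⁻¹) ^ A.card := by
  classical
  rw [expectUnif_eq, Finset.sum_boole, card_filter_forall]
  have hA : A.card ≤ K := le_trans (Finset.card_le_univ A) (by simp)
  have hN' : (0:ℝ) < N := by exact_mod_cast hN
  rw [div_eq_iff (by positivity), inv_pow]
  push_cast
  rw [inv_mul_eq_div, eq_div_iff (by positivity), ← pow_add, Nat.sub_add_cancel hA]

end Aux

section Aux2
variable {N K : ℕ}

lemma ite_one_mul_ite_one (P Q : Prop) [Decidable P] [Decidable Q] :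
    (if P then (1:ℝ) else 0) * (if Q then (1:ℝ) else 0) = if P ∧ Q then 1 else 0 := by
  by_cases hP : P <;> by_cases hQ : Q <;> simp [hP, hQ]

lemma occupancy_pow (L : ℕ) (π : Fin K → Fin N) (i : Fin N) :
    (occupancy π i : ℝ) ^ L
      = ∑ k : Fin L → Fin K, ∏ t, (if π (k t) = i then (1:ℝ) else 0) := by
  classical
  have h : (occupancy π i : ℝ) = ∑ k : Fin K, (if π k = i then (1:ℝ) else 0) := by
    rw [occupancy, Finset.sum_boole]
  rw [h, Fintype.sum_pow]

lemma prod_ind_eq (L : ℕ) (π : Fin K → Fin N) (i : Fin N) (k : Fin L → Fin K) :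
    (∏ t, (if π (k t) = i then (1:ℝ) else 0))
      = if ∀ a ∈ Finset.image k Finset.univ, π a = i then (1:ℝ) else 0 := by
  classical
  by_cases h : ∀ a ∈ Finset.image k Finset.univ, π a = i
  · rw [if_pos h]
    exact Finset.prod_eq_one fun t _ =>
      if_pos (h _ (Finset.mem_image_of_mem k (Finset.mem_univ t)))
  · rw [if_neg h]
    push_neg at h
    obtain ⟨a, ha, hne⟩ := h
    obtain ⟨t, _, rfl⟩ := Finset.mem_image.1 ha
    exact Finset.prod_eq_zero (Finset.mem_univ t) (if_neg hne)

lemma expect_occ_pow (hN : 0 < N) (L : ℕ) (i : Fin N) :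
    expectUnif (fun π : Fin K → Fin N => (occupancy π i : ℝ) ^ L)
      = ∑ k : Fin L → Fin K, ((N:ℝ)⁻¹) ^ (Finset.image k Finset.univ).card := by
  classical
  simp only [occupancy_pow, prod_ind_eq]
  rw [expectUnif_sum]
  exact Finset.sum_congr rfl fun k _ => expectUnif_ind hN _ (fun _ => i)

lemma cross_le (hN : 0 < N) (L : ℕ) (i j : Fin N) (hij : i ≠ j) :
    expectUnif (fun π : Fin K → Fin N =>
        (occupancy π i : ℝ) ^ L * (occupancy π j : ℝ) ^ L)
      ≤ expectUnif (fun π : Fin K → Fin N => (occupancy π i : ℝ) ^ L)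
        * expectUnif (fun π : Fin K → Fin N => (occupancy π j : ℝ) ^ L) := by
  classical
  have hexp : ∀ π : Fin K → Fin N,
      (occupancy π i : ℝ) ^ L * (occupancy π j : ℝ) ^ L
        = ∑ k : Fin L → Fin K, ∑ l : Fin L → Fin K,
            (if (∀ a ∈ Finset.image k Finset.univ, π a = i)
                ∧ (∀ b ∈ Finset.image l Finset.univ, π b = j) then (1:ℝ) else 0) := by
    intro π
    rw [occupancy_pow, occupancy_pow, Finset.sum_mul_sum]
    exact Finset.sum_congr rfl fun k _ => Finset.sum_congr rfl fun l _ => by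
      rw [prod_ind_eq, prod_ind_eq, ite_one_mul_ite_one]
  simp only [hexp]
  rw [expectUnif_sum]
  rw [expect_occ_pow hN, expect_occ_pow hN, Finset.sum_mul_sum]
  refine Finset.sum_le_sum fun k _ => ?_
  rw [expectUnif_sum]
  refine Finset.sum_le_sum fun l _ => ?_
  set A := Finset.image k Finset.univ
  set B := Finset.image l Finset.univ
  by_cases hAB : Disjoint A B
  · -- exact independence
    have hcond : ∀ π : Fin K → Fin N,
        ((∀ a ∈ A, π a = i) ∧ (∀ b ∈ B, π b = j))
          ↔ (∀ c ∈ A ∪ B, π c = (if c ∈ A then i else j)) := by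
      intro π
      constructor
      · rintro ⟨hA, hB⟩ c hc
        rcases Finset.mem_union.1 hc with hcA | hcB
        · simp [hcA, hA c hcA]
        · have : c ∉ A := fun hcA => (Finset.disjoint_left.1 hAB hcA) hcB
          simp [this, hB c hcB]
      · intro h
        refine ⟨fun a ha => ?_, fun b hb => ?_⟩
        · have := h a (Finset.mem_union_left _ ha); simpa [ha] using this
        · have hbA : b ∉ A := fun hbA => (Finset.disjoint_left.1 hAB hbA) hb
          have := h b (Finset.mem_union_right _ hb); simpa [hbA] using this
    have : (fun π : Fin K → Fin N =>
        if (∀ a ∈ A, π a = i) ∧ (∀ b ∈ B, π b = j) then (1:ℝ) else 0)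
        = fun π => if ∀ c ∈ A ∪ B, π c = (if c ∈ A then i else j) then (1:ℝ) else 0 := by
      funext π; exact if_congr (hcond π) rfl rfl
    rw [this, expectUnif_ind hN, Finset.card_union_of_disjoint hAB, pow_add]
  · -- overlapping supports: event is empty
    obtain ⟨c, hcA, hcB⟩ := Finset.not_disjoint_iff.1 hAB
    have hzero : (fun π : Fin K → Fin N =>
        if (∀ a ∈ A, π a = i) ∧ (∀ b ∈ B, π b = j) then (1:ℝ) else 0) = fun _ => 0 := by
      funext π
      rw [if_neg]
      rintro ⟨hA, hB⟩
      exact hij ((hA c hcA).symm.trans (hB c hcB))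
    rw [hzero]
    have : expectUnif (fun _ : Fin K → Fin N => (0:ℝ)) = 0 := by
      simp [expectUnif]
    rw [this]
    positivity

end Aux2

section Aux3
variable {N K : ℕ}

lemma expect_occ_pow_le (β : ℝ) (hβ : 0 ≤ β) (hN : 0 < N) (hK : (K:ℝ) ≤ β * N)
    (r : ℕ) (hr : 1 ≤ r) (i : Fin N) :
    expectUnif (fun π : Fin K → Fin N => (occupancy π i : ℝ) ^ r)
      ≤ (r:ℝ)^r * ((r:ℝ) * (max β 1)^r) := by
  classical
  set x : ℝ := (N:ℝ)⁻¹ with hx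
  have hx0 : 0 ≤ x := by positivity
  rw [expect_occ_pow hN]
  set T : Finset (Finset (Fin K)) :=
    Finset.univ.filter (fun A : Finset (Fin K) => 1 ≤ A.card ∧ A.card ≤ r) with hT
  have hfib : ∑ k : Fin r → Fin K, x ^ (Finset.image k Finset.univ).card
      = ∑ A : Finset (Fin K),
          ((Finset.univ.filter fun k : Fin r → Fin K =>
            Finset.image k Finset.univ = A).card : ℝ) * x ^ A.card := by
    rw [← Finset.sum_fiberwise' Finset.univ
      (fun k : Fin r → Fin K => Finset.image k Finset.univ)
      (fun A : Finset (Fin K) => x ^ A.card)]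
    exact Finset.sum_congr rfl fun A _ => by rw [Finset.sum_const, nsmul_eq_mul]
  rw [hfib]
  -- restrict the sum to T
  have hTsub : T ⊆ Finset.univ := Finset.filter_subset _ _
  have hzero : ∀ A ∈ (Finset.univ : Finset (Finset (Fin K))), A ∉ T →
      ((Finset.univ.filter fun k : Fin r → Fin K =>
        Finset.image k Finset.univ = A).card : ℝ) * x ^ A.card = 0 := by
    intro A _ hA
    have : (Finset.univ.filter fun k : Fin r → Fin K =>
        Finset.image k Finset.univ = A) = ∅ := by
      rw [Finset.filter_eq_empty_iff]
      intro k _ hk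
      apply hA
      rw [hT, Finset.mem_filter]
      refine ⟨Finset.mem_univ _, ?_, ?_⟩
      · rw [← hk]
        have : (Finset.univ : Finset (Fin r)).Nonempty :=
          Finset.univ_nonempty_iff.2 (Fin.pos_iff_nonempty.1 hr)
        exact Finset.card_pos.2 (this.image k)
      · rw [← hk]
        exact le_trans (Finset.card_image_le) (by simp)
    rw [this, Finset.card_empty]
    simp
  rw [← Finset.sum_subset hTsub hzero]
  -- bound the fiber cardinality by r^r
  have hcard : ∀ A ∈ T, ((Finset.univ.filter fun k : Fin r → Fin K =>
      Finset.image k Finset.univ = A).card : ℝ) ≤ (r:ℝ)^r := by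
    intro A hA
    rw [hT, Finset.mem_filter] at hA
    have hsub : (Finset.univ.filter fun k : Fin r → Fin K =>
        Finset.image k Finset.univ = A) ⊆ Fintype.piFinset (fun _ : Fin r => A) := by
      intro k hk
      rw [Finset.mem_filter] at hk
      rw [Fintype.mem_piFinset]
      intro t
      rw [← hk.2]
      exact Finset.mem_image_of_mem k (Finset.mem_univ t)
    have := Finset.card_le_card hsub
    rw [Fintype.card_piFinset] at this
    simp only [Finset.prod_const, Finset.card_univ, Fintype.card_fin] at this
    calc ((Finset.univ.filter fun k : Fin r → Fin K =>
          Finset.image k Finset.univ = A).card : ℝ)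
        ≤ ((A.card ^ r : ℕ) : ℝ) := by exact_mod_cast this
      _ ≤ (r:ℝ)^r := by
          have : A.card ^ r ≤ r ^ r := Nat.pow_le_pow_left hA.2.2 r
          exact_mod_cast this
  have step1 : ∑ A ∈ T, ((Finset.univ.filter fun k : Fin r → Fin K =>
      Finset.image k Finset.univ = A).card : ℝ) * x ^ A.card
      ≤ ∑ A ∈ T, (r:ℝ)^r * x ^ A.card := by
    refine Finset.sum_le_sum fun A hA => ?_
    exact mul_le_mul_of_nonneg_right (hcard A hA) (by positivity)
  refine le_trans step1 ?_
  rw [← Finset.mul_sum]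
  refine mul_le_mul_of_nonneg_left ?_ (by positivity)
  -- now bound ∑ A ∈ T, x ^ A.card
  have hTU : T = (Finset.Icc 1 r).biUnion
      (fun u => Finset.powersetCard u (Finset.univ : Finset (Fin K))) := by
    ext A
    simp [hT, Finset.mem_powersetCard_univ, Finset.mem_Icc]
  have hdisj : ∀ u ∈ Finset.Icc 1 r, ∀ v ∈ Finset.Icc 1 r, u ≠ v →
      Disjoint (Finset.powersetCard u (Finset.univ : Finset (Fin K)))
        (Finset.powersetCard v (Finset.univ : Finset (Fin K))) := by
    intro u _ v _ huv
    rw [Finset.disjoint_left]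
    intro A hu hv
    rw [Finset.mem_powersetCard_univ] at hu hv
    exact huv (hu ▸ hv ▸ rfl)
  rw [hTU, Finset.sum_biUnion hdisj]
  have inner : ∀ u ∈ Finset.Icc 1 r,
      ∑ A ∈ Finset.powersetCard u (Finset.univ : Finset (Fin K)), x ^ A.card
        ≤ (max β 1)^r := by
    intro u hu
    rw [Finset.mem_Icc] at hu
    have hsum : ∑ A ∈ Finset.powersetCard u (Finset.univ : Finset (Fin K)), x ^ A.card
        = ∑ _A ∈ Finset.powersetCard u (Finset.univ : Finset (Fin K)), x ^ u :=
      Finset.sum_congr rfl fun A hA => by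
        rw [Finset.mem_powersetCard_univ] at hA; rw [hA]
    rw [hsum, Finset.sum_const, nsmul_eq_mul, Finset.card_powersetCard, Finset.card_univ,
      Fintype.card_fin]
    have h1 : (K.choose u : ℝ) ≤ (K:ℝ) ^ u := by exact_mod_cast Nat.choose_le_pow K u
    have hNpos : (0:ℝ) < N := by exact_mod_cast hN
    calc (K.choose u : ℝ) * x ^ u ≤ (K:ℝ)^u * x ^ u :=
          mul_le_mul_of_nonneg_right h1 (by positivity)
      _ = ((K:ℝ) / N) ^ u := by rw [hx, inv_pow, div_pow, div_eq_mul_inv]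
      _ ≤ (max β 1) ^ u := by
          refine pow_le_pow_left₀ (by positivity) ?_ u
          rw [div_le_iff₀ hNpos]
          calc (K:ℝ) ≤ β * N := hK
            _ ≤ max β 1 * N := mul_le_mul_of_nonneg_right (le_max_left _ _) hNpos.le
      _ ≤ (max β 1) ^ r := pow_le_pow_right₀ (le_max_right _ _) hu.2
  calc ∑ u ∈ Finset.Icc 1 r,
        ∑ A ∈ Finset.powersetCard u (Finset.univ : Finset (Fin K)), x ^ A.card
      ≤ ∑ u ∈ Finset.Icc 1 r, (max β 1)^r := Finset.sum_le_sum inner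
    _ = (r:ℝ) * (max β 1)^r := by
        rw [Finset.sum_const, nsmul_eq_mul, Nat.card_Icc]
        norm_num

end Aux3

/-- Fix `β > 0` and `L ≥ 1`.  With `K = ⌊βN⌋` i.i.d. uniform draws on
`{1,…,N}` and the `L`-th empirical spectral moment `m_L(N) = (1/N)·Σ_i ν_i^L`, the variance
`Var[m_L(N)] = E[m_L(N)²] − (E[m_L(N)])²` is `O(1/N)`: there is a constant `C`
(depending only on `β` and `L`) with `Var[m_L(N)] ≤ C/N` for all `N ≥ 1`. -/
theorem variance_empirical_spectral_moment_le (β : ℝ) (hβ : 0 < β) (L : ℕ) (hL : 1 ≤ L) :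
    ∃ C : ℝ, ∀ N : ℕ, 1 ≤ N →
      expectUnif (fun π : Fin ⌊β * (N : ℝ)⌋₊ → Fin N => (empMoment L π) ^ 2) -
          (expectUnif (fun π : Fin ⌊β * (N : ℝ)⌋₊ → Fin N => empMoment L π)) ^ 2 ≤
        C / (N : ℝ) := by
  classical
  set r : ℕ := L + L with hrdef
  have hr : 1 ≤ r := by omega
  refine ⟨(r:ℝ)^r * ((r:ℝ) * (max β 1)^r), ?_⟩
  intro N hN
  set K : ℕ := ⌊β * (N:ℝ)⌋₊ with hKdef
  have hN0 : 0 < N := hN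
  have hNpos : (0:ℝ) < N := by exact_mod_cast hN0
  have hK : (K:ℝ) ≤ β * N := Nat.floor_le (by positivity)
  set C1 : ℝ := (r:ℝ)^r * ((r:ℝ) * (max β 1)^r) with hC1
  set Ei : Fin N → ℝ :=
    fun i => expectUnif (fun π : Fin K → Fin N => (occupancy π i : ℝ)^L) with hEi
  set Eij : Fin N → Fin N → ℝ := fun i j =>
    expectUnif (fun π : Fin K → Fin N =>
      (occupancy π i : ℝ)^L * (occupancy π j : ℝ)^L) with hEij
  have hEm2 : expectUnif (fun π : Fin K → Fin N => (empMoment L π)^2)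
      = (1/(N:ℝ))^2 * ∑ i : Fin N, ∑ j : Fin N, Eij i j := by
    have h1 : ∀ π : Fin K → Fin N, (empMoment L π)^2
        = (1/(N:ℝ))^2 * ∑ i : Fin N, ∑ j : Fin N,
            (occupancy π i : ℝ)^L * (occupancy π j : ℝ)^L := by
      intro π
      rw [empMoment, mul_pow]
      congr 1
      rw [sq, Finset.sum_mul_sum]
    simp only [h1]
    rw [expectUnif_const_mul]
    congr 1
    rw [expectUnif_sum]
    exact Finset.sum_congr rfl fun i _ => expectUnif_sum _ _
  have hEm : expectUnif (fun π : Fin K → Fin N => empMoment L π)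
      = (1/(N:ℝ)) * ∑ i : Fin N, Ei i := by
    simp only [empMoment]
    rw [expectUnif_const_mul, expectUnif_sum]
  have hdiag : ∀ i : Fin N, Eij i i ≤ C1 := by
    intro i
    have hfun : (fun π : Fin K → Fin N =>
        (occupancy π i : ℝ)^L * (occupancy π i : ℝ)^L)
        = fun π : Fin K → Fin N => (occupancy π i : ℝ)^r := by
      funext π
      rw [← pow_add]
    rw [hEij]
    simp only [hfun]
    exact expect_occ_pow_le β hβ.le hN0 hK r hr i
  have hS : ∑ i : Fin N, ∑ j : Fin N, Eij i j
      - ∑ i : Fin N, ∑ j : Fin N, Ei i * Ei j ≤ (N:ℝ) * C1 := by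
    rw [← Finset.sum_sub_distrib]
    have : ∀ i : Fin N, ∑ j : Fin N, Eij i j - ∑ j : Fin N, Ei i * Ei j
        ≤ ∑ j : Fin N, (if i = j then C1 else 0) := by
      intro i
      rw [← Finset.sum_sub_distrib]
      refine Finset.sum_le_sum fun j _ => ?_
      by_cases hij : i = j
      · subst hij
        rw [if_pos rfl]
        have h2 : Ei i * Ei i ≥ 0 := mul_self_nonneg _
        calc Eij i i - Ei i * Ei i ≤ Eij i i := by linarith
          _ ≤ C1 := hdiag i
      · rw [if_neg hij]
        exact sub_nonpos.2 (cross_le (K := K) hN0 L i j hij)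
    calc ∑ i : Fin N, (∑ j : Fin N, Eij i j - ∑ j : Fin N, Ei i * Ei j)
        ≤ ∑ i : Fin N, ∑ j : Fin N, (if i = j then C1 else 0) :=
          Finset.sum_le_sum fun i _ => this i
      _ = (N:ℝ) * C1 := by
          simp [Finset.sum_ite_eq, Finset.card_univ, mul_comm]
  calc expectUnif (fun π : Fin K → Fin N => (empMoment L π)^2)
        - (expectUnif (fun π : Fin K → Fin N => empMoment L π))^2
      = (1/(N:ℝ))^2 * (∑ i : Fin N, ∑ j : Fin N, Eij i j
          - ∑ i : Fin N, ∑ j : Fin N, Ei i * Ei j) := by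
        rw [hEm2, hEm, mul_pow, sq (∑ i : Fin N, Ei i), Finset.sum_mul_sum, mul_sub]
    _ ≤ (1/(N:ℝ))^2 * ((N:ℝ) * C1) := by
        refine mul_le_mul_of_nonneg_left hS (by positivity)
    _ = C1 / N := by
        field_simp
end

section
/- Fix β > 0 and an integer N_s ≥ 1. For each N_h let N = N_s·N_h, K = ⌊βN⌋, and let S be an N×K TH matrix whose columns are i.i.d. (N_s,N_h)-sequences. Then for every ε > 0, P( rank(S)/N > min{β, 1 − e^{−N_s β}} + ε ) → 0 as N_h → ∞; moreover rank(S)/N ≤ min{1, K/N} holds surely. -/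
/-- A realization of an `(N_s, N_h)`-sequence, encoded by `f : Fin N_s → Fin N_h × Bool`:
the `N = N_s·N_h` coordinates are indexed by (block, slot) pairs, and in block `m` the
unique nonzero entry sits in slot `(f m).1` with value `±1/√N_s` according to the sign
`(f m).2`.  Averaging uniformly over all `f` gives the uniform random `(N_s,N_h)`-sequence. -/
noncomputable def thSeq {Ns Nh : ℕ} (f : Fin Ns → Fin Nh × Bool) :
    Fin Ns × Fin Nh → ℝ :=
  fun p => if (f p.1).1 = p.2 then
    (if (f p.1).2 then 1 else -1) / Real.sqrt (Ns : ℝ) else 0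

/-- A realization of an `N×K` TH matrix with parameter `N_s` (rows indexed by
(block, slot) pairs, `N = N_s·N_h`), whose columns are `(N_s,N_h)`-sequences. -/
noncomputable def thMatrixNs {Ns Nh K : ℕ} (ω : Fin K → Fin Ns → Fin Nh × Bool) :
    Matrix (Fin Ns × Fin Nh) (Fin K) ℝ :=
  fun p k => thSeq (ω k) p

/-!
A row of `S` (slot `h` of block `m`) vanishes unless some column puts its pulse there, so
`rank S ≤ N - Z`, where `Z` counts the slots hit by no column. A given slot is missed by all
`K` columns with probability `(1 - 1/N_h)^K → e^{-N_s β}`. Emptiness of two distinct slots is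
negatively correlated (their hit events are disjoint within a block and independent across
blocks), so `Var Z ≤ N`, and Chebyshev's inequality gives `Z ≥ N (e^{-N_s β} - ε)` outside an
event of probability `O(1/(N ε²))`. The bound by `β` is just `rank S ≤ K ≤ β N`.
-/

open Finset Filter Topology

section Occupancy

variable {ι κ α : Type*} [Fintype ι] [DecidableEq ι] [Fintype κ] [Fintype α] [DecidableEq α]

/-- `B p` is the set of column values that miss the cell `p`. -/
def missCount (B : κ → Finset α) (ω : ι → α) : ℕ := #{p | ∀ i, ω i ∈ B p}

lemma card_filter_forall_mem (s : Finset α) :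
    #{ω : ι → α | ∀ i, ω i ∈ s} = #s ^ Fintype.card ι := by
  have : ({ω : ι → α | ∀ i, ω i ∈ s} : Finset (ι → α)) = Fintype.piFinset fun _ => s := by
    ext ω; simp [Fintype.mem_piFinset]
  rw [this, Fintype.card_piFinset, prod_const, card_univ]

lemma sum_missCount (B : κ → Finset α) :
    ∑ ω : ι → α, missCount B ω = ∑ p, #(B p) ^ Fintype.card ι := by
  simp only [missCount, card_filter]
  rw [sum_comm]
  simp only [← card_filter, card_filter_forall_mem]

lemma sum_missCount_sq (B : κ → Finset α) :
    ∑ ω : ι → α, missCount B ω ^ 2 = ∑ p, ∑ q, #(B p ∩ B q) ^ Fintype.card ι := by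
  simp only [missCount, sq, card_filter, sum_mul_sum, ite_zero_mul_ite_zero, mul_one]
  rw [sum_comm]
  refine sum_congr rfl fun p _ => ?_
  rw [sum_comm]
  simp only [← forall_and, ← mem_inter, ← card_filter, card_filter_forall_mem]

lemma card_mul_sum_missCount_sq_le (B : κ → Finset α)
    (hB : ∀ p q, p ≠ q → Fintype.card α * #(B p ∩ B q) ≤ #(B p) * #(B q)) :
    Fintype.card (ι → α) * ∑ ω : ι → α, missCount B ω ^ 2
      ≤ (∑ ω : ι → α, missCount B ω) ^ 2 + Fintype.card κ * Fintype.card (ι → α) ^ 2 := by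
  classical
  rw [sum_missCount_sq, sum_missCount, sq (∑ p, _), sum_mul_sum, mul_sum, Fintype.card_fun,
    Fintype.card_eq_sum_ones (α := κ), sum_mul, ← sum_add_distrib]
  refine sum_le_sum fun p _ => ?_
  rw [mul_sum, Fintype.sum_eq_add_sum_compl p, Fintype.sum_eq_add_sum_compl p, inter_self, one_mul]
  simp only [← mul_pow]
  have hdiag :
      (Fintype.card α * #(B p)) ^ Fintype.card ι ≤ (Fintype.card α ^ Fintype.card ι) ^ 2 := by
    rw [sq, ← mul_pow]
    exact Nat.pow_le_pow_left (Nat.mul_le_mul_left _ (card_le_univ _)) _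
  rw [add_right_comm]
  exact add_le_add (hdiag.trans (Nat.le_add_left _ _))
    (sum_le_sum fun q hq => Nat.pow_le_pow_left (hB p q (by simpa [eq_comm] using hq)) _)

end Occupancy

lemma card_mul_card_inter_le_of_union_eq_univ {X : Type*} [Fintype X] [DecidableEq X]
    {s t : Finset X} (h : s ∪ t = univ) : Fintype.card X * #(s ∩ t) ≤ #s * #t := by
  have hst := card_union_add_card_inter s t
  rw [h, card_univ] at hst
  have hs := card_le_univ s
  have ht := card_le_univ t
  nlinarith [Nat.mul_le_mul (Nat.sub_le_sub_left hs (Fintype.card X))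
    (Nat.sub_le_sub_left ht (Fintype.card X))]

lemma card_mul_card_piFinset_inter_le {ι X : Type*} [Fintype ι] [DecidableEq ι] [Fintype X]
    [DecidableEq X] {s t : ι → Finset X} (h : ∀ i, s i ∪ t i = univ) :
    Fintype.card (ι → X) * #(Fintype.piFinset s ∩ Fintype.piFinset t)
      ≤ #(Fintype.piFinset s) * #(Fintype.piFinset t) := by
  rw [← Fintype.piFinset_inter, Fintype.card_piFinset, Fintype.card_piFinset,
    Fintype.card_piFinset, Fintype.card_pi, ← prod_mul_distrib, ← prod_mul_distrib]
  exact prod_le_prod' fun i _ => card_mul_card_inter_le_of_union_eq_univ (h i)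

lemma card_mul_card_filter_mul_sq_le {Ω : Type*} [Fintype Ω] (f : Ω → ℝ) {t : ℝ} (ht : 0 ≤ t) :
    Fintype.card Ω * #{ω | Fintype.card Ω * (f ω + t) ≤ ∑ ω, f ω} * t ^ 2
      ≤ Fintype.card Ω * ∑ ω, f ω ^ 2 - (∑ ω, f ω) ^ 2 := by
  set n : ℝ := (Fintype.card Ω : ℝ)
  set S := ∑ ω, f ω
  rcases isEmpty_or_nonempty Ω with hΩ | hΩ
  · simp [n, S]
  have hn : 0 < n := by positivity
  have hdev : ∑ ω, (n * f ω - S) ^ 2 = n * (n * ∑ ω, f ω ^ 2 - S ^ 2) := by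
    simp only [sub_sq, sum_add_distrib, sum_sub_distrib, mul_pow, ← mul_sum, ← sum_mul,
      sum_const, card_univ, nsmul_eq_mul]
    ring
  have hfar : ∀ ω ∈ ({ω | n * (f ω + t) ≤ S} : Finset Ω), (n * t) ^ 2 ≤ (n * f ω - S) ^ 2 := by
    intro ω hω
    have hgap : n * t ≤ S - n * f ω := by linarith [(mem_filter.mp hω).2]
    nlinarith [mul_nonneg hn.le ht]
  have := (card_nsmul_le_sum _ _ _ hfar).trans
    (sum_le_univ_sum_of_nonneg (f := fun ω => (n * f ω - S) ^ 2) fun _ => sq_nonneg _)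
  rw [hdev, nsmul_eq_mul] at this
  nlinarith

lemma tendsto_one_sub_inv_pow_floor_mul {a : ℝ} (ha : 0 ≤ a) :
    Tendsto (fun n : ℕ => (1 - 1 / (n : ℝ)) ^ ⌊a * n⌋₊) atTop (𝓝 (Real.exp (-a))) := by
  have hfloor : Tendsto (fun n : ℕ => (⌊a * n⌋₊ : ℝ) / n) atTop (𝓝 a) :=
    (tendsto_nat_floor_mul_div_atTop ha).comp tendsto_natCast_atTop_atTop
  have hlog : Tendsto (fun n : ℕ => (n : ℝ) * Real.log (1 + -1 / n)) atTop (𝓝 (-1)) :=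
    (Real.tendsto_mul_log_one_add_div_atTop (-1)).comp tendsto_natCast_atTop_atTop
  have hexp := (Real.continuous_exp.tendsto _).comp (hfloor.mul hlog)
  rw [mul_neg_one] at hexp
  refine hexp.congr' ?_
  filter_upwards [eventually_ge_atTop 2] with n hn
  have hn' : (2 : ℝ) ≤ n := by exact_mod_cast hn
  have hpos : 0 < 1 - 1 / (n : ℝ) := by
    rw [sub_pos, div_lt_one (by linarith)]; linarith
  rw [Function.comp_apply, ← Real.rpow_natCast, Real.rpow_def_of_pos hpos, neg_div,
    ← sub_eq_add_neg]
  congr 1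
  field_simp

section TH

variable {Ns Nh K : ℕ}

def thMissSlots (p : Fin Ns × Fin Nh) (m : Fin Ns) : Finset (Fin Nh × Bool) :=
  if m = p.1 then (univ.erase p.2) ×ˢ univ else univ

/-- The columns missing cell `p`, written as a product set so that the negative correlation of
two cells reduces to a coordinatewise check (`card_mul_card_piFinset_inter_le`). -/
def thMissSet (p : Fin Ns × Fin Nh) : Finset (Fin Ns → Fin Nh × Bool) :=
  Fintype.piFinset (thMissSlots p)

lemma mem_thMissSet {p : Fin Ns × Fin Nh} {a : Fin Ns → Fin Nh × Bool} :
    a ∈ thMissSet p ↔ (a p.1).1 ≠ p.2 := by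
  simp only [thMissSet, thMissSlots, Fintype.mem_piFinset]
  refine ⟨fun h => by simpa using h p.1, fun h m => ?_⟩
  split_ifs with hm
  · subst hm; simpa using h
  · exact mem_univ _

lemma thMissSlots_union {p q : Fin Ns × Fin Nh} (hpq : p ≠ q) (m : Fin Ns) :
    thMissSlots p m ∪ thMissSlots q m = univ := by
  unfold thMissSlots
  split_ifs with hp hq
  · have : p.2 ≠ q.2 := fun h => hpq (Prod.ext (hp ▸ hq) h)
    ext x
    simp only [mem_union, mem_product, mem_erase, mem_univ, and_true, ne_eq, iff_true]
    by_contra! hx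
    exact this (hx.1.symm.trans hx.2)
  all_goals simp

lemma card_thMissSet (p : Fin Ns × Fin Nh) :
    (#(thMissSet p) : ℝ) = Fintype.card (Fin Ns → Fin Nh × Bool) * (1 - 1 / Nh) := by
  have hNh : 1 ≤ Nh := Fin.pos p.2
  have hrest : ∏ m ∈ {p.1}ᶜ, #(thMissSlots p m) = ∏ m ∈ {p.1}ᶜ, Fintype.card (Fin Nh × Bool) :=
    prod_congr rfl fun m hm => by
      rw [thMissSlots, if_neg (by simpa using hm), card_univ]
  rw [thMissSet, Fintype.card_piFinset, Fintype.card_pi, Fintype.prod_eq_mul_prod_compl p.1,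
    Fintype.prod_eq_mul_prod_compl p.1 (fun _ => Fintype.card _), hrest, thMissSlots, if_pos rfl,
    card_product, card_erase_of_mem (mem_univ _), card_univ, card_univ]
  simp only [Fintype.card_fin, Fintype.card_prod, Fintype.card_bool]
  push_cast [Nat.cast_sub hNh]
  field_simp

lemma rank_thMatrixNs_add_missCount_le (ω : Fin K → Fin Ns → Fin Nh × Bool) :
    (thMatrixNs ω).rank + missCount thMissSet ω ≤ Ns * Nh := by
  have hrank : (thMatrixNs ω).rank ≤ #{p | ¬ ∀ k, ω k ∈ thMissSet p} :=
    (thMatrixNs ω).rank_le_card_of_support_subset _ fun p hp =>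
      mem_coe.mpr <| mem_filter.mpr ⟨mem_univ _, fun hmiss => hp <| funext fun k => by
        simp [Matrix.row, thMatrixNs, thSeq, mem_thMissSet.mp (hmiss k)]⟩
  calc (thMatrixNs ω).rank + missCount thMissSet ω
      ≤ #{p | ¬ ∀ k, ω k ∈ thMissSet p} + missCount thMissSet ω := Nat.add_le_add_right hrank _
    _ = Ns * Nh := by rw [missCount, add_comm, card_filter_add_card_filter_not]; simp

lemma sum_missCount_thMissSet :
    ∑ ω : Fin K → Fin Ns → Fin Nh × Bool, (missCount thMissSet ω : ℝ)
      = Fintype.card (Fin K → Fin Ns → Fin Nh × Bool) * ((Ns * Nh : ℕ) : ℝ) * (1 - 1 / Nh) ^ K := by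
  rw [← Nat.cast_sum, sum_missCount]
  simp only [Nat.cast_sum, Nat.cast_pow, card_thMissSet, mul_pow, sum_const, card_univ,
    nsmul_eq_mul, Fintype.card_prod, Fintype.card_fin, Fintype.card_fun (α := Fin K)]
  push_cast
  ring

lemma card_mul_sum_missCount_thMissSet_sq_le :
    Fintype.card (Fin K → Fin Ns → Fin Nh × Bool)
        * ∑ ω : Fin K → Fin Ns → Fin Nh × Bool, missCount thMissSet ω ^ 2
      ≤ (∑ ω : Fin K → Fin Ns → Fin Nh × Bool, missCount thMissSet ω) ^ 2
        + Ns * Nh * Fintype.card (Fin K → Fin Ns → Fin Nh × Bool) ^ 2 := by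
  simpa only [Fintype.card_prod, Fintype.card_fin] using
    card_mul_sum_missCount_sq_le thMissSet fun p q hpq =>
      card_mul_card_piFinset_inter_le (thMissSlots_union hpq)

lemma rank_thMatrixNs_div_le (ω : Fin K → Fin Ns → Fin Nh × Bool) :
    ((thMatrixNs ω).rank : ℝ) / ((Ns * Nh : ℕ) : ℝ) ≤ min 1 ((K : ℝ) / ((Ns * Nh : ℕ) : ℝ)) := by
  have hheight : (thMatrixNs ω).rank ≤ Ns * Nh := by
    simpa using (thMatrixNs ω).rank_le_card_height
  have hwidth : (thMatrixNs ω).rank ≤ K := by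
    simpa using (thMatrixNs ω).rank_le_card_width
  exact le_min (div_le_one_of_le₀ (by exact_mod_cast hheight) (Nat.cast_nonneg _))
    (div_le_div_of_nonneg_right (by exact_mod_cast hwidth) (Nat.cast_nonneg _))

lemma rank_thMatrixNs_div_le_of_floor {β : ℝ} (hβ : 0 ≤ β)
    (ω : Fin ⌊β * ((Ns * Nh : ℕ) : ℝ)⌋₊ → Fin Ns → Fin Nh × Bool) :
    ((thMatrixNs ω).rank : ℝ) / ((Ns * Nh : ℕ) : ℝ) ≤ β :=
  (rank_thMatrixNs_div_le ω).trans <| (min_le_right _ _).trans <|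
    div_le_of_le_mul₀ (Nat.cast_nonneg _) hβ (Nat.floor_le (by positivity))

lemma card_rank_thMatrixNs_gt_le (hN : 0 < Ns * Nh) {c ε : ℝ} (hε : 0 < ε)
    (hc : c ≤ (1 - 1 / (Nh : ℝ)) ^ K + ε / 2) :
    (#{ω : Fin K → Fin Ns → Fin Nh × Bool |
        1 - c + ε < ((thMatrixNs ω).rank : ℝ) / ((Ns * Nh : ℕ) : ℝ)} : ℝ)
      ≤ 4 / (((Ns * Nh : ℕ) : ℝ) * ε ^ 2) * Fintype.card (Fin K → Fin Ns → Fin Nh × Bool) := by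
  have : Nonempty (Fin Nh) := ⟨⟨0, Nat.pos_of_mul_pos_left hN⟩⟩
  set n : ℝ := (Fintype.card (Fin K → Fin Ns → Fin Nh × Bool) : ℝ)
  set N : ℝ := ((Ns * Nh : ℕ) : ℝ)
  set Z : (Fin K → Fin Ns → Fin Nh × Bool) → ℝ := fun ω => (missCount thMissSet ω : ℝ)
  have hn : 0 < n := by positivity
  have hN' : 0 < N := by positivity
  have hmean : ∑ ω, Z ω = n * N * (1 - 1 / (Nh : ℝ)) ^ K := sum_missCount_thMissSet
  have hsub : ({ω | 1 - c + ε < ((thMatrixNs ω).rank : ℝ) / N} : Finset _)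
      ⊆ ({ω | n * (Z ω + N * ε / 2) ≤ ∑ ω, Z ω} : Finset _) := by
    refine monotone_filter_right _ fun ω _ hω => ?_
    have hrank : ((thMatrixNs ω).rank : ℝ) + Z ω ≤ N := by
      simp only [Z, N]
      exact_mod_cast rank_thMatrixNs_add_missCount_le ω
    rw [lt_div_iff₀ hN'] at hω
    have hfar : Z ω + N * ε / 2 ≤ N * (1 - 1 / (Nh : ℝ)) ^ K := by
      nlinarith [mul_le_mul_of_nonneg_left hc hN'.le]
    rw [hmean, mul_assoc]
    exact mul_le_mul_of_nonneg_left hfar hn.le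
  have hcheb := card_mul_card_filter_mul_sq_le Z (t := N * ε / 2) (by positivity)
  have hvar : n * ∑ ω, Z ω ^ 2 - (∑ ω, Z ω) ^ 2 ≤ N * n ^ 2 := by
    rw [sub_le_iff_le_add']
    simp only [n, N, Z]
    exact_mod_cast card_mul_sum_missCount_thMissSet_sq_le
  have hfew : (#({ω | n * (Z ω + N * ε / 2) ≤ ∑ ω, Z ω} : Finset _) : ℝ) * (N * ε / 2) ^ 2
      ≤ N * n :=
    le_of_mul_le_mul_left (by linarith) hn
  calc (#{ω : Fin K → Fin Ns → Fin Nh × Bool | 1 - c + ε < ((thMatrixNs ω).rank : ℝ) / N} : ℝ)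
      ≤ #({ω | n * (Z ω + N * ε / 2) ≤ ∑ ω, Z ω} : Finset _) := by
        exact_mod_cast card_le_card hsub
    _ ≤ 4 / (N * ε ^ 2) * n := by
        rw [div_mul_eq_mul_div, le_div_iff₀ (by positivity)]
        exact le_of_mul_le_mul_left (by linarith) hN'

end TH

/-- Fix `β > 0` and an integer `N_s ≥ 1`.  For each `N_h` let
`N = N_s·N_h`, `K = ⌊βN⌋`, and let `S` be an `N×K` TH matrix with i.i.d.
`(N_s,N_h)`-sequence columns (probabilities computed by uniform counting over all
realizations).  Then for every `ε > 0`,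
`P( rank(S)/N > min{β, 1 − e^{−N_s β}} + ε ) → 0` as `N_h → ∞`; moreover
`rank(S)/N ≤ min{1, K/N}` holds surely. -/
theorem rank_upper_bound_TH (β : ℝ) (hβ : 0 < β) (Ns : ℕ) (hNs : 1 ≤ Ns) :
    (∀ ε : ℝ, 0 < ε →
      Filter.Tendsto
        (fun Nh : ℕ =>
          ((Nat.card {ω : Fin ⌊β * ((Ns * Nh : ℕ) : ℝ)⌋₊ → Fin Ns → Fin Nh × Bool //
              min β (1 - Real.exp (-(Ns : ℝ) * β)) + ε <
                ((thMatrixNs ω).rank : ℝ) / ((Ns * Nh : ℕ) : ℝ)} : ℕ) : ℝ) /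
            (Fintype.card (Fin ⌊β * ((Ns * Nh : ℕ) : ℝ)⌋₊ → Fin Ns → Fin Nh × Bool) : ℝ))
        Filter.atTop (nhds 0)) ∧
    ∀ (Nh : ℕ) (ω : Fin ⌊β * ((Ns * Nh : ℕ) : ℝ)⌋₊ → Fin Ns → Fin Nh × Bool),
      ((thMatrixNs ω).rank : ℝ) / ((Ns * Nh : ℕ) : ℝ) ≤
        min 1 ((⌊β * ((Ns * Nh : ℕ) : ℝ)⌋₊ : ℝ) / ((Ns * Nh : ℕ) : ℝ)) := by
  refine ⟨fun ε hε => ?_, fun Nh ω => rank_thMatrixNs_div_le ω⟩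
  have hN : Tendsto (fun Nh : ℕ => ((Ns * Nh : ℕ) : ℝ)) atTop atTop :=
    tendsto_natCast_atTop_atTop.comp
      (tendsto_atTop_mono (fun Nh => Nat.le_mul_of_pos_left Nh hNs) tendsto_id)
  have hq : Tendsto (fun Nh : ℕ => (1 - 1 / (Nh : ℝ)) ^ ⌊β * ((Ns * Nh : ℕ) : ℝ)⌋₊) atTop
      (𝓝 (Real.exp (-(Ns : ℝ) * β))) := by
    convert tendsto_one_sub_inv_pow_floor_mul (a := Ns * β) (by positivity) using 4
    · push_cast; ring
    · ring
  have hbound : Tendsto (fun Nh : ℕ => 4 / (((Ns * Nh : ℕ) : ℝ) * ε ^ 2)) atTop (𝓝 0) :=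
    tendsto_const_nhds.div_atTop (hN.atTop_mul_const (by positivity))
  refine tendsto_of_tendsto_of_tendsto_of_le_of_le' tendsto_const_nhds hbound
    (Eventually.of_forall fun _ => by positivity) ?_
  filter_upwards [hN.eventually_gt_atTop 0,
    hq.eventually (eventually_gt_nhds (sub_lt_self _ (half_pos hε)))] with Nh hNpos hqNh
  refine div_le_of_le_mul₀ (Nat.cast_nonneg _) (by positivity) ?_
  refine le_trans ?_ (card_rank_thMatrixNs_gt_le (by exact_mod_cast hNpos) hε
    (c := Real.exp (-(Ns : ℝ) * β)) (by linarith))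
  rw [Nat.card_eq_fintype_card, Fintype.card_subtype]
  refine Nat.cast_le.mpr (card_le_card (monotone_filter_right _ fun ω _ hω => ?_))
  -- `rank/N ≤ β` rules out the minimum being `β`.
  rcases min_choice β (1 - Real.exp (-(Ns : ℝ) * β)) with h | h <;> rw [h] at hω
  · linarith [rank_thMatrixNs_div_le_of_floor hβ.le ω]
  · simpa using hω
end

section
/- Fix β > 0 and define C(γ) = Σ_{k ≥ 0} (β^k e^{−β}/k!) · log₂(1 + kγ) for γ > 0 (the large-system spectral efficiency of TH-CDMA with N_s = 1 and optimum decoding). Then, as γ → ∞, C(γ) − (1 − e^{−β}) log₂ γ converges to Σ_{k ≥ 1} (β^k e^{−β}/k!) · log₂ k. In particular the high-SNR slope is S_∞ = lim_{γ→∞} C(γ)/log₂ γ = 1 − e^{−β}, and the high-SNR decibel offset is L_∞ = log₂ β − (1 − e^{−β})^{−1} Σ_{k>1} (β^k e^{−β}/k!) log₂ k. -/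
/-!
Splitting `log₂(1 + kγ) = log₂ γ + log₂(k + 1/γ)` for `k ≥ 1` shows that
`C(γ) − P(λ ≥ 1)·log₂ γ = Σ_{k≥1} p_k log₂(k + 1/γ)` for the Poisson weights `p_k`,
where `P(λ ≥ 1) = 1 − e^{−β}`.
For `γ ≥ 1` the `k`-th term is dominated by `p_k k / ln 2`, which is summable because the
Poisson law has a finite mean, so dominated convergence lets `γ → ∞` termwise.
The slope and the offset are then read off this expansion.
-/

/-- The large-system spectral efficiency of TH-CDMA with `N_s = 1`, load `β`, and optimum
decoding: `C(γ) = Σ_{k≥0} (β^k e^{−β}/k!)·log₂(1 + kγ)` (the integral of `log₂(1+λγ)`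
against a Poisson law with mean `β`). -/
noncomputable def thCapacity (β γ : ℝ) : ℝ :=
  ∑' k : ℕ, β ^ k * Real.exp (-β) / (Nat.factorial k : ℝ) * Real.logb 2 (1 + (k : ℝ) * γ)

open Filter Real Topology

lemma tsum_nat_add_one_eq_of_apply_zero {M : Type*} [AddCommMonoid M] [TopologicalSpace M]
    {f : ℕ → M} (h : f 0 = 0) :
    ∑' k, f (k + 1) = ∑' k, f k := by
  refine (add_left_injective 1).tsum_eq fun k hk => ?_
  cases k with
  | zero => exact absurd h hk
  | succ j => exact ⟨j, rfl⟩

section WeightedLogSum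

variable {w : ℕ → ℝ}

lemma summable_nat_add_one_of_summable_mul_nat (hw : Summable fun k : ℕ => w k * k) :
    Summable fun k : ℕ => w (k + 1) := by
  refine ((summable_nat_add_iff 1).2 hw).norm.of_norm_bounded fun k => ?_
  rw [norm_mul, Nat.cast_succ, Real.norm_of_nonneg (by positivity : (0 : ℝ) ≤ k + 1)]
  exact le_mul_of_one_le_right (norm_nonneg _) (by simp)

lemma logb_one_add_nat_add_one_mul {γ : ℝ} (hγ : 0 < γ) (k : ℕ) :
    logb 2 (1 + (k + 1) * γ) = logb 2 (k + 1 + γ⁻¹) + logb 2 γ := by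
  rw [← logb_mul (by positivity) hγ.ne']
  congr 1
  field_simp
  ring

lemma abs_logb_nat_add_one_add_inv_le {γ : ℝ} (hγ : 1 ≤ γ) (k : ℕ) :
    |logb 2 (k + 1 + γ⁻¹)| ≤ (k + 1) / log 2 := by
  have hinv : γ⁻¹ ≤ 1 := inv_le_one_of_one_le₀ hγ
  have hinv₀ : 0 ≤ γ⁻¹ := by positivity
  have hx : 1 ≤ (k : ℝ) + 1 + γ⁻¹ := by linarith [(k.cast_nonneg : (0 : ℝ) ≤ k)]
  rw [abs_of_nonneg (logb_nonneg one_lt_two hx), logb]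
  gcongr
  linarith [log_le_sub_one_of_pos (by linarith : (0 : ℝ) < k + 1 + γ⁻¹)]

lemma tsum_mul_eq_tsum_nat_add_one {g : ℝ → ℝ} (hg : g 0 = 0) :
    ∑' k : ℕ, w k * g k = ∑' k : ℕ, w (k + 1) * g (k + 1) := by
  rw [← tsum_nat_add_one_eq_of_apply_zero (f := fun k : ℕ => w k * g k) (by simp [hg])]
  push_cast
  rfl

lemma tsum_mul_logb_one_add_mul_eq {γ : ℝ} (hγ : 0 < γ) (hw₁ : Summable fun k : ℕ => w (k + 1))
    (hs : Summable fun k : ℕ => w (k + 1) * logb 2 (k + 1 + γ⁻¹)) :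
    ∑' k, w k * logb 2 (1 + k * γ) =
      ∑' k : ℕ, w (k + 1) * logb 2 (k + 1 + γ⁻¹) + (∑' k, w (k + 1)) * logb 2 γ := by
  have hsplit : ∀ k : ℕ, w (k + 1) * logb 2 (1 + (k + 1) * γ) =
      w (k + 1) * logb 2 (k + 1 + γ⁻¹) + w (k + 1) * logb 2 γ := fun k => by
    rw [logb_one_add_nat_add_one_mul hγ k, mul_add]
  rw [tsum_mul_eq_tsum_nat_add_one (g := fun x => logb 2 (1 + x * γ)) (by simp),
    tsum_congr hsplit, hs.tsum_add (hw₁.mul_right _), tsum_mul_right]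

theorem tendsto_tsum_mul_logb_one_add_mul_sub (hw : Summable fun k : ℕ => w k * k) :
    Tendsto (fun γ => ∑' k, w k * logb 2 (1 + k * γ) - (∑' k, w (k + 1)) * logb 2 γ)
      atTop (𝓝 (∑' k, w k * logb 2 k)) := by
  have hbound : Summable fun k : ℕ => |w (k + 1)| * ((k + 1) / log 2) := by
    refine (((summable_nat_add_iff 1).2 hw).abs.div_const (log 2)).congr fun k => ?_
    rw [abs_mul, Nat.cast_succ, abs_of_nonneg (by positivity : (0 : ℝ) ≤ k + 1), mul_div_assoc]
  have hdom : ∀ γ : ℝ, 1 ≤ γ → ∀ k : ℕ, ‖w (k + 1) * logb 2 (k + 1 + γ⁻¹)‖ ≤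
      |w (k + 1)| * ((k + 1) / log 2) := fun γ hγ k => by
    rw [norm_mul, Real.norm_eq_abs, Real.norm_eq_abs]
    exact mul_le_mul_of_nonneg_left (abs_logb_nat_add_one_add_inv_le hγ k) (abs_nonneg _)
  have hlim : Tendsto (fun γ => ∑' k : ℕ, w (k + 1) * logb 2 (k + 1 + γ⁻¹)) atTop
      (𝓝 (∑' k : ℕ, w (k + 1) * logb 2 (k + 1))) := by
    refine tendsto_tsum_of_dominated_convergence hbound (fun k => ?_)
      ((eventually_ge_atTop 1).mono hdom)
    have h := (tendsto_inv_atTop_zero.const_add ((k : ℝ) + 1)).logb (b := 2) (by positivity)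
    rw [add_zero] at h
    exact h.const_mul _
  rw [tsum_mul_eq_tsum_nat_add_one logb_zero]
  refine hlim.congr' ?_
  filter_upwards [eventually_ge_atTop 1] with γ hγ
  rw [tsum_mul_logb_one_add_mul_eq (by linarith) (summable_nat_add_one_of_summable_mul_nat hw)
    (hbound.of_norm_bounded (hdom γ hγ)), add_sub_cancel_right]

end WeightedLogSum

noncomputable def poissonWeight (β : ℝ) (k : ℕ) : ℝ :=
  β ^ k * exp (-β) / (Nat.factorial k : ℝ)

lemma hasSum_poissonWeight (β : ℝ) : HasSum (poissonWeight β) 1 := by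
  have h := (NormedSpace.expSeries_div_hasSum_exp β).mul_right (exp (-β))
  rw [← exp_eq_exp_ℝ, ← exp_add, add_neg_cancel, exp_zero] at h
  exact h.congr_fun fun k => by simp only [poissonWeight]; ring

lemma poissonWeight_succ_mul (β : ℝ) (k : ℕ) :
    poissonWeight β (k + 1) * (k + 1) = β * poissonWeight β k := by
  simp only [poissonWeight, Nat.factorial_succ, Nat.cast_mul, Nat.cast_succ, pow_succ]
  field_simp

lemma summable_poissonWeight_mul_nat (β : ℝ) :
    Summable fun k : ℕ => poissonWeight β k * k := by
  refine (summable_nat_add_iff 1).1 <|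
    ((hasSum_poissonWeight β).summable.mul_left β).congr fun k => ?_
  rw [Nat.cast_succ, poissonWeight_succ_mul]

lemma tsum_poissonWeight_succ (β : ℝ) : ∑' k, poissonWeight β (k + 1) = 1 - exp (-β) := by
  refine ((hasSum_nat_add_iff' 1).2 (hasSum_poissonWeight β)).tsum_eq.trans ?_
  simp [poissonWeight]

theorem tendsto_thCapacity_sub_mul_logb (β : ℝ) :
    Tendsto (fun γ => thCapacity β γ - (1 - exp (-β)) * logb 2 γ) atTop
      (𝓝 (∑' k, poissonWeight β k * logb 2 k)) := by
  rw [← tsum_poissonWeight_succ]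
  exact tendsto_tsum_mul_logb_one_add_mul_sub (summable_poissonWeight_mul_nat β)

section HighSNR

variable {α : Type*} {l : Filter α} {f g : α → ℝ} {S L : ℝ}

lemma tendsto_div_of_tendsto_sub_mul (h : Tendsto (fun x => f x - S * g x) l (𝓝 L))
    (hg : Tendsto g l atTop) : Tendsto (fun x => f x / g x) l (𝓝 S) := by
  have h₀ := (h.div_atTop hg).add_const S
  rw [zero_add] at h₀
  refine h₀.congr' ?_
  filter_upwards [hg.eventually_ne_atTop 0] with x hx
  field_simp
  ring

lemma tendsto_sub_div_of_tendsto_sub_mul (h : Tendsto (fun x => f x - S * g x) l (𝓝 L))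
    (hS : S ≠ 0) : Tendsto (fun x => g x - f x / S) l (𝓝 (-(L / S))) := by
  refine (h.div_const S).neg.congr fun x => ?_
  field_simp
  ring

end HighSNR

/-- Fix `β > 0`.  As `γ → ∞`:
(i) `C(γ) − (1 − e^{−β})·log₂ γ → Σ_{k≥1} (β^k e^{−β}/k!)·log₂ k`;
(ii) the high-SNR slope is `S_∞ = lim C(γ)/log₂ γ = 1 − e^{−β}`;
(iii) the high-SNR decibel offset `L_∞ = log₂ β + lim (log₂ γ − C(γ)/S_∞)` equals
`log₂ β − (1 − e^{−β})^{−1}·Σ_{k>1} (β^k e^{−β}/k!)·log₂ k`. -/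
theorem thCapacity_high_snr (β : ℝ) (hβ : 0 < β) :
    Filter.Tendsto
        (fun γ : ℝ => thCapacity β γ - (1 - Real.exp (-β)) * Real.logb 2 γ)
        Filter.atTop
        (nhds (∑' k : ℕ, β ^ k * Real.exp (-β) / (Nat.factorial k : ℝ) *
          Real.logb 2 (k : ℝ))) ∧
    Filter.Tendsto (fun γ : ℝ => thCapacity β γ / Real.logb 2 γ)
        Filter.atTop (nhds (1 - Real.exp (-β))) ∧
    Filter.Tendsto
        (fun γ : ℝ => Real.logb 2 β +
          (Real.logb 2 γ - thCapacity β γ / (1 - Real.exp (-β))))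
        Filter.atTop
        (nhds (Real.logb 2 β - (1 - Real.exp (-β))⁻¹ *
          ∑' k : ℕ, if 2 ≤ k then
            β ^ k * Real.exp (-β) / (Nat.factorial k : ℝ) * Real.logb 2 (k : ℝ) else 0)) := by
  have hoffset := tendsto_thCapacity_sub_mul_logb β
  have hslope : 1 - exp (-β) ≠ 0 := (sub_pos.2 (exp_lt_one_iff.2 (neg_lt_zero.2 hβ))).ne'
  -- the terms `k = 0, 1` vanish: `log₂ 1 = 0`, and `log₂ 0 = 0` by Mathlib's convention
  have hdrop : (∑' k : ℕ, if 2 ≤ k then poissonWeight β k * logb 2 k else 0) =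
      ∑' k, poissonWeight β k * logb 2 k := by
    refine tsum_congr fun k => ?_
    rcases lt_or_ge k 2 with hk | hk
    · interval_cases k <;> simp
    · rw [if_pos hk]
  refine ⟨hoffset, tendsto_div_of_tendsto_sub_mul hoffset (tendsto_logb_atTop one_lt_two), ?_⟩
  change Tendsto _ _ (𝓝 (_ - _ * ∑' k : ℕ, if 2 ≤ k then poissonWeight β k * logb 2 k else 0))
  rw [hdrop, sub_eq_add_neg, inv_mul_eq_div]
  exact (tendsto_sub_div_of_tendsto_sub_mul hoffset hslope).const_add _
end

section
/- Fix β > 0 and define C(γ) = Σ_{k ≥ 0} (β^k e^{−β}/k!) · log₂(1 + kγ) for γ > 0. Then lim_{γ→0⁺} C(γ)/γ = β/ln 2 and lim_{γ→0⁺} (C(γ) − βγ/ln 2)/γ² = −β(1+β)/(2 ln 2). Consequently, the minimum energy-per-bit is η_min = lim_{γ→0⁺} βγ/C(γ) = ln 2, and the wideband slope is S₀ = −2 ln 2 · (C′(0⁺))²/C″(0⁺) = 2β/(1+β). -/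
open Real Filter

private lemma myexp_tsum (x : ℝ) : (∑' n : ℕ, x ^ n / (n.factorial : ℝ)) = Real.exp x := by
  rw [Real.exp_eq_exp_ℝ, NormedSpace.exp_eq_tsum_div]

private lemma log_one_add_ge {x : ℝ} (hx : 0 ≤ x) :
    x - x ^ 2 / 2 ≤ Real.log (1 + x) := by
  set f : ℝ → ℝ := fun t => Real.log (1 + t) - (t - t ^ 2 / 2) with hf
  have hderiv : ∀ t : ℝ, 0 < 1 + t → HasDerivAt f (1 / (1 + t) - (1 - t)) t := by
    intro t ht
    have h1 : HasDerivAt (fun t : ℝ => 1 + t) 1 t := by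
      simpa using (hasDerivAt_id t).const_add 1
    have h2 : HasDerivAt (fun t : ℝ => Real.log (1 + t)) (1 / (1 + t)) t := by
      simpa using h1.log ht.ne'
    have h3 : HasDerivAt (fun t : ℝ => t - t ^ 2 / 2) (1 - 2 * t ^ 1 / 2) t :=
      (hasDerivAt_id t).sub ((hasDerivAt_pow 2 t).div_const 2)
    have h4 : 1 - 2 * t ^ 1 / 2 = 1 - t := by ring
    rw [h4] at h3
    exact h2.sub h3
  have hmono : MonotoneOn f (Set.Ici 0) := by
    apply monotoneOn_of_deriv_nonneg (convex_Ici 0)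
    · apply ContinuousOn.sub
      · apply ContinuousOn.log (by fun_prop)
        intro t ht
        simp only [Set.mem_Ici] at ht
        positivity
      · fun_prop
    · intro t ht
      rw [interior_Ici] at ht
      exact ((hderiv t (by simp at ht; linarith)).differentiableAt).differentiableWithinAt
    · intro t ht
      rw [interior_Ici] at ht
      simp only [Set.mem_Ioi] at ht
      rw [(hderiv t (by linarith)).deriv]
      have h1t : (0:ℝ) < 1 + t := by linarith
      have : 1 - t ≤ 1 / (1 + t) := by
        rw [le_div_iff₀ h1t]; nlinarith
      linarith
  have h := hmono Set.self_mem_Ici (Set.mem_Ici.2 hx) hx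
  simp only [hf, Real.log_one, add_zero, ne_eq, zero_pow, zero_div, sub_zero] at h
  norm_num at h
  linarith

private lemma log_one_add_le {x : ℝ} (hx : 0 ≤ x) :
    Real.log (1 + x) ≤ x - x ^ 2 / 2 + x ^ 3 / 3 := by
  set f : ℝ → ℝ := fun t => (t - t ^ 2 / 2 + t ^ 3 / 3) - Real.log (1 + t) with hf
  have hderiv : ∀ t : ℝ, 0 < 1 + t → HasDerivAt f ((1 - t + t ^ 2) - 1 / (1 + t)) t := by
    intro t ht
    have h1 : HasDerivAt (fun t : ℝ => 1 + t) 1 t := by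
      simpa using (hasDerivAt_id t).const_add 1
    have h2 : HasDerivAt (fun t : ℝ => Real.log (1 + t)) (1 / (1 + t)) t := by
      simpa using h1.log ht.ne'
    have h3 : HasDerivAt (fun t : ℝ => t - t ^ 2 / 2 + t ^ 3 / 3)
        (1 - 2 * t ^ 1 / 2 + 3 * t ^ 2 / 3) t :=
      ((hasDerivAt_id t).sub ((hasDerivAt_pow 2 t).div_const 2)).add
        ((hasDerivAt_pow 3 t).div_const 3)
    have h4 : 1 - 2 * t ^ 1 / 2 + 3 * t ^ 2 / 3 = 1 - t + t ^ 2 := by ring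
    rw [h4] at h3
    exact h3.sub h2
  have hmono : MonotoneOn f (Set.Ici 0) := by
    apply monotoneOn_of_deriv_nonneg (convex_Ici 0)
    · apply ContinuousOn.sub
      · fun_prop
      · apply ContinuousOn.log (by fun_prop)
        intro t ht
        simp only [Set.mem_Ici] at ht
        positivity
    · intro t ht
      rw [interior_Ici] at ht
      exact ((hderiv t (by simp at ht; linarith)).differentiableAt).differentiableWithinAt
    · intro t ht
      rw [interior_Ici] at ht
      simp only [Set.mem_Ioi] at ht
      rw [(hderiv t (by linarith)).deriv]
      have h1t : (0:ℝ) < 1 + t := by linarith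
      have : 1 / (1 + t) ≤ 1 - t + t ^ 2 := by
        rw [div_le_iff₀ h1t]; nlinarith
      linarith
  have h := hmono Set.self_mem_Ici (Set.mem_Ici.2 hx) hx
  simp only [hf, Real.log_one, add_zero] at h
  norm_num at h
  linarith

private lemma summable_mono {β : ℝ} (hβ : 0 < β) (m : ℕ) :
    Summable (fun k : ℕ => (k : ℝ) ^ m * β ^ k / (k.factorial : ℝ)) := by
  have hle : ∀ k : ℕ, (k : ℝ) ^ m * β ^ k / (k.factorial : ℝ)
      ≤ ((2:ℝ) ^ m * β) ^ k / (k.factorial : ℝ) := by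
    intro k
    have hk : (k : ℝ) ≤ 2 ^ k := by exact_mod_cast (Nat.lt_two_pow_self (n := k)).le
    have h1 : (k:ℝ) ^ m ≤ ((2:ℝ) ^ k) ^ m := pow_le_pow_left₀ (Nat.cast_nonneg k) hk m
    have h2 : ((2:ℝ) ^ k) ^ m = ((2:ℝ) ^ m) ^ k := by rw [← pow_mul, ← pow_mul, Nat.mul_comm]
    rw [mul_pow]
    gcongr
    rw [← h2]
    exact h1
  exact Summable.of_nonneg_of_le (fun k => by positivity) hle
    (Real.summable_pow_div_factorial _)

private lemma tsum_m1 {β : ℝ} (hβ : 0 < β) :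
    (∑' k : ℕ, (k : ℝ) * β ^ k / (k.factorial : ℝ)) = β * Real.exp β := by
  have hs : Summable (fun k : ℕ => (k : ℝ) * β ^ k / (k.factorial : ℝ)) := by
    simpa using summable_mono hβ 1
  rw [Summable.tsum_eq_zero_add hs]
  have key : ∀ j : ℕ, ((j + 1 : ℕ) : ℝ) * β ^ (j + 1) / (((j + 1).factorial : ℕ) : ℝ)
      = β * (β ^ j / (j.factorial : ℝ)) := by
    intro j
    have h2 : ((j.factorial : ℕ) : ℝ) ≠ 0 := Nat.cast_ne_zero.2 j.factorial_ne_zero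
    rw [Nat.factorial_succ]
    push_cast
    field_simp
    ring
  simp only [key]
  rw [tsum_mul_left, myexp_tsum]
  simp

private lemma tsum_m2 {β : ℝ} (hβ : 0 < β) :
    (∑' k : ℕ, (k : ℝ) ^ 2 * β ^ k / (k.factorial : ℝ)) = β * (1 + β) * Real.exp β := by
  have hs : Summable (fun k : ℕ => (k : ℝ) ^ 2 * β ^ k / (k.factorial : ℝ)) :=
    summable_mono hβ 2
  have hs1 : Summable (fun j : ℕ => β * ((j : ℝ) * β ^ j / (j.factorial : ℝ))) :=
    (by simpa using summable_mono hβ 1 : Summable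
      (fun k : ℕ => (k : ℝ) * β ^ k / (k.factorial : ℝ))).mul_left β
  have hs0 : Summable (fun j : ℕ => β * (β ^ j / (j.factorial : ℝ))) :=
    (Real.summable_pow_div_factorial β).mul_left β
  rw [Summable.tsum_eq_zero_add hs]
  have key : ∀ j : ℕ, ((j + 1 : ℕ) : ℝ) ^ 2 * β ^ (j + 1) / (((j + 1).factorial : ℕ) : ℝ)
      = β * ((j : ℝ) * β ^ j / (j.factorial : ℝ)) + β * (β ^ j / (j.factorial : ℝ)) := by
    intro j
    have h2 : ((j.factorial : ℕ) : ℝ) ≠ 0 := Nat.cast_ne_zero.2 j.factorial_ne_zero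
    have h3 : ((j : ℝ) + 1) ≠ 0 := by positivity
    rw [Nat.factorial_succ]
    push_cast
    field_simp
    ring
  simp only [key]
  rw [Summable.tsum_add hs1 hs0, tsum_mul_left, tsum_mul_left, tsum_m1 hβ, myexp_tsum]
  simp
  ring



private lemma cap_bounds {β : ℝ} (hβ : 0 < β) {γ : ℝ} (hγ : 0 < γ) :
    (β * γ - β * (1 + β) * γ ^ 2 / 2) / Real.log 2 ≤ thCapacity β γ ∧
    thCapacity β γ ≤ (β * γ - β * (1 + β) * γ ^ 2 / 2) / Real.log 2
      + γ ^ 3 * (Real.exp (-β) * (∑' k : ℕ, (k : ℝ) ^ 3 * β ^ k / (k.factorial : ℝ)))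
        / (3 * Real.log 2) := by
  have hL : (0:ℝ) < Real.log 2 := Real.log_pos one_lt_two
  have hE : (0:ℝ) < Real.exp (-β) := Real.exp_pos _
  set L := Real.log 2 with hLdef
  set E := Real.exp (-β) with hEdef
  set c : ℕ → ℝ := fun k => E / L * (β ^ k / (k.factorial : ℝ)) with hcdef
  have hc : ∀ k, 0 ≤ c k := fun k =>
    mul_nonneg (div_nonneg hE.le hL.le) (by positivity)
  set f : ℕ → ℝ := fun k => β ^ k * E / (k.factorial : ℝ) * Real.logb 2 (1 + (k : ℝ) * γ)
    with hfdef
  have hfc : ∀ k, f k = c k * Real.log (1 + (k : ℝ) * γ) := by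
    intro k
    simp only [hfdef, hcdef, Real.logb, hLdef]
    ring
  have hx : ∀ k : ℕ, 0 ≤ (k : ℝ) * γ := fun k => mul_nonneg (Nat.cast_nonneg k) hγ.le
  set lo : ℕ → ℝ := fun k => c k * ((k : ℝ) * γ - ((k : ℝ) * γ) ^ 2 / 2) with hlodef
  set hi : ℕ → ℝ := fun k =>
    c k * ((k : ℝ) * γ - ((k : ℝ) * γ) ^ 2 / 2 + ((k : ℝ) * γ) ^ 3 / 3) with hhidef
  have hlf : ∀ k, lo k ≤ f k := fun k => by
    rw [hfc k]
    exact mul_le_mul_of_nonneg_left (log_one_add_ge (hx k)) (hc k)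
  have hfh : ∀ k, f k ≤ hi k := fun k => by
    rw [hfc k]
    exact mul_le_mul_of_nonneg_left (log_one_add_le (hx k)) (hc k)
  have S0 := Real.summable_pow_div_factorial β
  have S1 : Summable (fun k : ℕ => (k : ℝ) * β ^ k / (k.factorial : ℝ)) := by
    simpa using summable_mono hβ 1
  have S2 := summable_mono hβ 2
  have S3 := summable_mono hβ 3
  have hlo_eq : ∀ k : ℕ, lo k = (E / L * γ) * ((k : ℝ) * β ^ k / (k.factorial : ℝ))
      + (-(E / L * γ ^ 2 / 2)) * ((k : ℝ) ^ 2 * β ^ k / (k.factorial : ℝ)) := by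
    intro k; simp only [hlodef, hcdef]; ring
  have Slo : Summable lo :=
    (((S1.mul_left _).add (S2.mul_left _)).congr (fun k => (hlo_eq k).symm))
  have hhi_eq : ∀ k : ℕ, hi k = lo k
      + (E / L * γ ^ 3 / 3) * ((k : ℝ) ^ 3 * β ^ k / (k.factorial : ℝ)) := by
    intro k; simp only [hlodef, hhidef, hcdef]; ring
  have Shi : Summable hi :=
    ((Slo.add (S3.mul_left _)).congr (fun k => (hhi_eq k).symm))
  have Sf : Summable f := by
    apply Summable.of_nonneg_of_le (fun k => ?_) hfh Shi
    rw [hfc k]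
    exact mul_nonneg (hc k) (Real.log_nonneg (by linarith [hx k]))
  have hEe : E * Real.exp β = 1 := by rw [hEdef, ← Real.exp_add]; simp
  have Tlo : ∑' k, lo k = (β * γ - β * (1 + β) * γ ^ 2 / 2) / L := by
    calc ∑' k, lo k = ∑' k : ℕ, ((E / L * γ) * ((k : ℝ) * β ^ k / (k.factorial : ℝ))
          + (-(E / L * γ ^ 2 / 2)) * ((k : ℝ) ^ 2 * β ^ k / (k.factorial : ℝ))) :=
        tsum_congr hlo_eq
      _ = (E / L * γ) * (β * Real.exp β)
          + (-(E / L * γ ^ 2 / 2)) * (β * (1 + β) * Real.exp β) := by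
        rw [Summable.tsum_add (S1.mul_left _) (S2.mul_left _), tsum_mul_left, tsum_mul_left,
          tsum_m1 hβ, tsum_m2 hβ]
      _ = (β * γ - β * (1 + β) * γ ^ 2 / 2) / L * (E * Real.exp β) := by ring
      _ = (β * γ - β * (1 + β) * γ ^ 2 / 2) / L := by rw [hEe, mul_one]
  have Thi : ∑' k, hi k = (β * γ - β * (1 + β) * γ ^ 2 / 2) / L
      + γ ^ 3 * (E * (∑' k : ℕ, (k : ℝ) ^ 3 * β ^ k / (k.factorial : ℝ))) / (3 * L) := by
    calc ∑' k, hi k = ∑' k : ℕ, (lo k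
          + (E / L * γ ^ 3 / 3) * ((k : ℝ) ^ 3 * β ^ k / (k.factorial : ℝ))) :=
        tsum_congr hhi_eq
      _ = (∑' k, lo k) + (E / L * γ ^ 3 / 3)
            * (∑' k : ℕ, (k : ℝ) ^ 3 * β ^ k / (k.factorial : ℝ)) := by
        rw [Summable.tsum_add Slo (S3.mul_left _), tsum_mul_left]
      _ = _ := by rw [Tlo]; ring
  have hcap : thCapacity β γ = ∑' k, f k := rfl
  constructor
  · rw [hcap, ← Tlo]
    exact Summable.tsum_le_tsum hlf Slo Sf
  · rw [hcap, ← Thi]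
    exact Summable.tsum_le_tsum hfh Sf Shi


/-- Fix `β > 0`.  As `γ → 0⁺`:
(i) `C(γ)/γ → β/ln 2` (i.e. `C′(0⁺) = β/ln 2`);
(ii) `(C(γ) − βγ/ln 2)/γ² → −β(1+β)/(2 ln 2)` (i.e. `C″(0⁺) = −β(1+β)/ln 2`);
(iii) the minimum energy-per-bit is `η_min = lim βγ/C(γ) = ln 2`;
(iv) the wideband slope `S₀ = −2 ln 2·(C′(0⁺))²/C″(0⁺)` equals `2β/(1+β)`. -/
theorem thCapacity_wideband (β : ℝ) (hβ : 0 < β) :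
    Filter.Tendsto (fun γ : ℝ => thCapacity β γ / γ)
        (nhdsWithin 0 (Set.Ioi 0)) (nhds (β / Real.log 2)) ∧
    Filter.Tendsto (fun γ : ℝ => (thCapacity β γ - β * γ / Real.log 2) / γ ^ 2)
        (nhdsWithin 0 (Set.Ioi 0)) (nhds (-(β * (1 + β)) / (2 * Real.log 2))) ∧
    Filter.Tendsto (fun γ : ℝ => β * γ / thCapacity β γ)
        (nhdsWithin 0 (Set.Ioi 0)) (nhds (Real.log 2)) ∧
    -2 * Real.log 2 * (β / Real.log 2) ^ 2 / (-(β * (1 + β)) / Real.log 2) =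
      2 * β / (1 + β) := by
  have hL : (0:ℝ) < Real.log 2 := Real.log_pos one_lt_two
  set L := Real.log 2 with hLdef
  set T : ℝ := Real.exp (-β) * (∑' k : ℕ, (k : ℝ) ^ 3 * β ^ k / (k.factorial : ℝ)) / (3 * L)
    with hTdef
  have hbounds : ∀ γ : ℝ, 0 < γ →
      (β * γ - β * (1 + β) * γ ^ 2 / 2) / L ≤ thCapacity β γ ∧
      thCapacity β γ ≤ (β * γ - β * (1 + β) * γ ^ 2 / 2) / L + γ ^ 3 * T := by
    intro γ hγ
    have h := cap_bounds hβ hγ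
    refine ⟨h.1, h.2.trans_eq ?_⟩
    rw [hTdef]
    ring
  have hi1 : Filter.Tendsto (fun γ : ℝ => thCapacity β γ / γ)
      (nhdsWithin 0 (Set.Ioi 0)) (nhds (β / L)) := by
    apply tendsto_of_tendsto_of_tendsto_of_le_of_le'
      (g := fun γ : ℝ => (β - β * (1 + β) * γ / 2) / L)
      (h := fun γ : ℝ => (β - β * (1 + β) * γ / 2) / L + γ ^ 2 * T)
    · have hc : Continuous fun γ : ℝ => (β - β * (1 + β) * γ / 2) / L := by fun_prop
      have h0 := (hc.tendsto 0).mono_left (nhdsWithin_le_nhds (s := Set.Ioi (0:ℝ)))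
      norm_num at h0
      exact h0
    · have hc : Continuous fun γ : ℝ => (β - β * (1 + β) * γ / 2) / L + γ ^ 2 * T := by
        fun_prop
      have h0 := (hc.tendsto 0).mono_left (nhdsWithin_le_nhds (s := Set.Ioi (0:ℝ)))
      norm_num at h0
      exact h0
    · filter_upwards [self_mem_nhdsWithin] with γ hγ
      have hγ' : (0:ℝ) < γ := hγ
      have hlow := (hbounds γ hγ').1
      have heq : (β - β * (1 + β) * γ / 2) / L
          = ((β * γ - β * (1 + β) * γ ^ 2 / 2) / L) / γ := by
        field_simp
      rw [heq]
      exact (div_le_div_iff_of_pos_right hγ').mpr hlow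
    · filter_upwards [self_mem_nhdsWithin] with γ hγ
      have hγ' : (0:ℝ) < γ := hγ
      have hup := (hbounds γ hγ').2
      have heq : (β - β * (1 + β) * γ / 2) / L + γ ^ 2 * T
          = ((β * γ - β * (1 + β) * γ ^ 2 / 2) / L + γ ^ 3 * T) / γ := by
        field_simp
      rw [heq]
      exact (div_le_div_iff_of_pos_right hγ').mpr hup
  refine ⟨hi1, ?_, ?_, ?_⟩
  · apply tendsto_of_tendsto_of_tendsto_of_le_of_le'
      (g := fun _ : ℝ => -(β * (1 + β)) / (2 * L))
      (h := fun γ : ℝ => -(β * (1 + β)) / (2 * L) + γ * T)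
    · exact tendsto_const_nhds
    · have hc : Continuous fun γ : ℝ => -(β * (1 + β)) / (2 * L) + γ * T := by fun_prop
      have h0 := (hc.tendsto 0).mono_left (nhdsWithin_le_nhds (s := Set.Ioi (0:ℝ)))
      norm_num at h0
      exact h0
    · filter_upwards [self_mem_nhdsWithin] with γ hγ
      have hγ' : (0:ℝ) < γ := hγ
      have hlow := (hbounds γ hγ').1
      rw [le_div_iff₀ (by positivity : (0:ℝ) < γ ^ 2)]
      have heq : -(β * (1 + β)) / (2 * L) * γ ^ 2 + β * γ / L
          = (β * γ - β * (1 + β) * γ ^ 2 / 2) / L := by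
        field_simp
        ring
      linarith
    · filter_upwards [self_mem_nhdsWithin] with γ hγ
      have hγ' : (0:ℝ) < γ := hγ
      have hup := (hbounds γ hγ').2
      rw [div_le_iff₀ (by positivity : (0:ℝ) < γ ^ 2)]
      have heq : (-(β * (1 + β)) / (2 * L) + γ * T) * γ ^ 2 + β * γ / L
          = (β * γ - β * (1 + β) * γ ^ 2 / 2) / L + γ ^ 3 * T := by
        field_simp
        ring
      linarith
  · have hne : β / L ≠ 0 := ne_of_gt (div_pos hβ hL)
    have key : (fun γ : ℝ => β * γ / thCapacity β γ)
        = fun γ : ℝ => β / (thCapacity β γ / γ) := by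
      funext γ
      rw [div_div_eq_mul_div]
    have hval : β / (β / L) = L := by
      field_simp
    rw [key, ← hval]
    exact Filter.Tendsto.div tendsto_const_nhds hi1 hne
  · have hβ1 : (1:ℝ) + β ≠ 0 := by positivity
    field_simp
end

section
/- Let s₁ and s₂ be two independent (N_s,N_h)-sequences in ℝ^N, N = N_s·N_h, and let ρ = s₁ᵀs₂ be their cross-correlation. Then ρ is the sum of N_s i.i.d. random variables, each taking value −1/N_s with probability 1/(2N_h), 0 with probability 1 − 1/N_h, and +1/N_s with probability 1/(2N_h); consequently its moment generating function is E[e^{tρ}] = [ (1 − 1/N_h) + (1/N_h)·cosh(t/N_s) ]^{N_s} for all t ∈ ℝ, and in particular E[ρ²] = 1/N. -/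
/-- A realization of an `(N_s, N_h)`-sequence, encoded by `f : Fin N_s → Fin N_h × Bool`:
the `N = N_s·N_h` coordinates are indexed by (block, slot) pairs, and in block `m` the
unique nonzero entry sits in slot `(f m).1` with value `±1/√N_s` according to the sign
`(f m).2`.  Averaging uniformly over all `f` gives the uniform random `(N_s,N_h)`-sequence. -/



noncomputable def thE (b : Bool) : ℝ := if b then 1 else -1

noncomputable def thPhi (Ns Nh : ℕ) (z : (Fin Nh × Bool) × (Fin Nh × Bool)) : ℝ :=
  if z.1.1 = z.2.1 then thE z.1.2 * thE z.2.2 / (Ns : ℝ) else 0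

lemma keyL {n : ℕ} {β : Type*} [Fintype β] (H : Fin n → β → ℝ) :
    ∑ h : Fin n → β, ∏ k, H k (h k) = ∏ k, ∑ z, H k z := by
  rw [Finset.prod_univ_sum]
  rw [Fintype.piFinset_univ]

lemma oneCoord {n : ℕ} {β : Type*} [Fintype β] (m : Fin n) (G : β → ℝ) :
    ∑ h : Fin n → β, G (h m) = (Fintype.card β : ℝ) ^ (n - 1) * ∑ z, G z := by
  have h1 : ∀ h : Fin n → β, G (h m) = ∏ k, (if k = m then G (h k) else 1) := by
    intro h
    rw [Finset.prod_ite_eq' Finset.univ m (fun k => G (h k))]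
    simp
  calc ∑ h : Fin n → β, G (h m)
      = ∑ h : Fin n → β, ∏ k, (if k = m then G (h k) else 1) := by
        simp only [h1]
    _ = ∏ k, ∑ z, (if k = m then G z else 1) := keyL (fun k z => if k = m then G z else 1)
    _ = ∏ k, (if k = m then ∑ z, G z else (Fintype.card β : ℝ)) := by
        refine Finset.prod_congr rfl (fun k _ => ?_)
        split_ifs <;> simp
    _ = (Fintype.card β : ℝ) ^ (n - 1) * ∑ z, G z := by
        rw [← Finset.mul_prod_erase Finset.univ _ (Finset.mem_univ m)]
        rw [if_pos rfl]
        rw [Finset.prod_congr rfl (fun k hk => if_neg (Finset.ne_of_mem_erase hk))]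
        rw [Finset.prod_const, Finset.card_erase_of_mem (Finset.mem_univ m)]
        simp [mul_comm]

lemma crossZero {n : ℕ} {β : Type*} [Fintype β] {m m' : Fin n} (hmm : m ≠ m')
    (G G' : β → ℝ) (hG' : ∑ z, G' z = 0) :
    ∑ h : Fin n → β, G (h m) * G' (h m') = 0 := by
  have h1 : ∀ h : Fin n → β,
      G (h m) * G' (h m') = ∏ k, (if k = m then G (h k) else if k = m' then G' (h k) else 1) := by
    intro h
    rw [← Finset.mul_prod_erase Finset.univ _ (Finset.mem_univ m), if_pos rfl]
    congr 1
    rw [Finset.prod_congr rfl (fun k hk => if_neg (Finset.ne_of_mem_erase hk))]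
    rw [Finset.prod_ite_eq' (Finset.univ.erase m) m' (fun k => G' (h k))]
    rw [if_pos (Finset.mem_erase.mpr ⟨Ne.symm hmm, Finset.mem_univ m'⟩)]
  simp only [h1]
  rw [keyL (fun k z => if k = m then G z else if k = m' then G' z else 1)]
  apply Finset.prod_eq_zero (Finset.mem_univ m')
  simp [Ne.symm hmm, hG']

lemma sum_ite_fin {n : ℕ} (x : Fin n) (a b : ℝ) :
    ∑ y : Fin n, (if x = y then a else b) = a + ((n : ℝ) - 1) * b := by
  have h1 : ∀ y : Fin n, (if x = y then a else b) = b + (if x = y then a - b else 0) := by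
    intro y; split_ifs <;> ring
  simp only [h1]
  rw [Finset.sum_add_distrib, Finset.sum_const, Finset.sum_ite_eq]
  simp
  ring

lemma sumPhi (Ns Nh : ℕ) (F : ℝ → ℝ) :
    ∑ z : (Fin Nh × Bool) × (Fin Nh × Bool), F (thPhi Ns Nh z)
    = (Nh : ℝ) * ((2 * F (1/(Ns:ℝ)) + 2 * F (-(1/(Ns:ℝ)))) + ((Nh:ℝ) - 1) * (4 * F 0)) := by
  simp only [Fintype.sum_prod_type, thPhi, thE]
  have hswap : ∀ x : Fin Nh,
      (∑ s : Bool, ∑ y : Fin Nh, ∑ t : Bool,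
        F (if x = y then (if s then (1:ℝ) else -1) * (if t then (1:ℝ) else -1) / (Ns:ℝ) else 0))
      = ∑ y : Fin Nh, ∑ s : Bool, ∑ t : Bool,
        F (if x = y then (if s then (1:ℝ) else -1) * (if t then (1:ℝ) else -1) / (Ns:ℝ) else 0) :=
    fun x => Finset.sum_comm
  simp only [hswap]
  have hinner : ∀ x y : Fin Nh,
      (∑ s : Bool, ∑ t : Bool,
        F (if x = y then (if s then (1:ℝ) else -1) * (if t then (1:ℝ) else -1) / (Ns:ℝ) else 0))
      = if x = y then (2 * F (1/(Ns:ℝ)) + 2 * F (-(1/(Ns:ℝ)))) else 4 * F 0 := by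
    intro x y
    by_cases h : x = y
    · simp only [if_pos h, Fintype.sum_bool]
      norm_num
      ring_nf
    · simp only [if_neg h, Fintype.sum_bool]
      ring
  simp only [hinner]
  rw [Finset.sum_congr rfl (fun x _ => sum_ite_fin x _ _), Finset.sum_const, Finset.card_univ,
    Fintype.card_fin, nsmul_eq_mul]

lemma sum_pair_eq {Ns Nh : ℕ} (K : (Fin Ns → (Fin Nh × Bool) × (Fin Nh × Bool)) → ℝ) :
    ∑ ω : (Fin Ns → Fin Nh × Bool) × (Fin Ns → Fin Nh × Bool), K (fun m => (ω.1 m, ω.2 m))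
    = ∑ h : Fin Ns → (Fin Nh × Bool) × (Fin Nh × Bool), K h :=
  Equiv.sum_comp (Equiv.arrowProdEquivProdArrow _ _ _).symm K

lemma cardPair (Ns Nh : ℕ) :
    Fintype.card ((Fin Ns → Fin Nh × Bool) × (Fin Ns → Fin Nh × Bool))
    = (Fintype.card ((Fin Nh × Bool) × (Fin Nh × Bool))) ^ Ns := by
  simp [Fintype.card_prod, Fintype.card_fun, mul_pow]

/-- The cross-correlation `ρ = s₁ᵀs₂` of a pair of `(N_s,N_h)`-sequences. -/
noncomputable def thRho {Ns Nh : ℕ}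
    (ω : (Fin Ns → Fin Nh × Bool) × (Fin Ns → Fin Nh × Bool)) : ℝ :=
  ∑ p : Fin Ns × Fin Nh, thSeq ω.1 p * thSeq ω.2 p

/-- The contribution `ρ_m = s_{1m}ᵀ s_{2m}` of block `m` to the cross-correlation. -/
noncomputable def thRhoBlock {Ns Nh : ℕ}
    (ω : (Fin Ns → Fin Nh × Bool) × (Fin Ns → Fin Nh × Bool)) (m : Fin Ns) : ℝ :=
  ∑ j : Fin Nh, thSeq ω.1 (m, j) * thSeq ω.2 (m, j)

lemma thRhoBlock_eq {Ns Nh : ℕ}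
    (ω : (Fin Ns → Fin Nh × Bool) × (Fin Ns → Fin Nh × Bool)) (m : Fin Ns) :
    thRhoBlock ω m = thPhi Ns Nh (ω.1 m, ω.2 m) := by
  obtain ⟨f, g⟩ := ω
  simp only [thRhoBlock, thSeq, thPhi, thE]
  rw [Finset.sum_eq_single (f m).1]
  · by_cases h : (f m).1 = (g m).1
    · rw [← h]
      simp only [if_pos rfl, if_true]
      rw [div_mul_div_comm, Real.mul_self_sqrt (Nat.cast_nonneg Ns)]
    · simp [h, Ne.symm h]
  · intro j _ hj
    rw [if_neg (fun hh => hj hh.symm), zero_mul]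
  · intro hmem
    exact absurd (Finset.mem_univ _) hmem

/-- Let `s₁, s₂` be independent `(N_s,N_h)`-sequences (modelled by the
uniform distribution on pairs of realizations) and `ρ = s₁ᵀs₂`.  Then: (i) `ρ = Σ_m ρ_m`
is the sum of the `N_s` block contributions; (ii) each `ρ_m` takes value `−1/N_s` with
probability `1/(2N_h)`, `0` with probability `1 − 1/N_h`, and `+1/N_s` with probability
`1/(2N_h)`; (iii) `E[e^{tρ}] = [(1 − 1/N_h) + (1/N_h)·cosh(t/N_s)]^{N_s}` for all `t`;
(iv) `E[ρ²] = 1/N` with `N = N_s·N_h`. -/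
theorem th_cross_correlation_mgf (Ns Nh : ℕ) (hNs : 1 ≤ Ns) (hNh : 1 ≤ Nh) :
    (∀ ω : (Fin Ns → Fin Nh × Bool) × (Fin Ns → Fin Nh × Bool),
      thRho ω = ∑ m : Fin Ns, thRhoBlock ω m) ∧
    (∀ m : Fin Ns,
      ((Nat.card {ω : (Fin Ns → Fin Nh × Bool) × (Fin Ns → Fin Nh × Bool) //
          thRhoBlock ω m = -(1 / (Ns : ℝ))} : ℕ) : ℝ) /
        (Fintype.card ((Fin Ns → Fin Nh × Bool) × (Fin Ns → Fin Nh × Bool)) : ℝ) =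
        1 / (2 * (Nh : ℝ)) ∧
      ((Nat.card {ω : (Fin Ns → Fin Nh × Bool) × (Fin Ns → Fin Nh × Bool) //
          thRhoBlock ω m = 0} : ℕ) : ℝ) /
        (Fintype.card ((Fin Ns → Fin Nh × Bool) × (Fin Ns → Fin Nh × Bool)) : ℝ) =
        1 - 1 / (Nh : ℝ) ∧
      ((Nat.card {ω : (Fin Ns → Fin Nh × Bool) × (Fin Ns → Fin Nh × Bool) //
          thRhoBlock ω m = 1 / (Ns : ℝ)} : ℕ) : ℝ) /
        (Fintype.card ((Fin Ns → Fin Nh × Bool) × (Fin Ns → Fin Nh × Bool)) : ℝ) =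
        1 / (2 * (Nh : ℝ))) ∧
    (∀ t : ℝ,
      (∑ ω : (Fin Ns → Fin Nh × Bool) × (Fin Ns → Fin Nh × Bool),
          Real.exp (t * thRho ω)) /
        (Fintype.card ((Fin Ns → Fin Nh × Bool) × (Fin Ns → Fin Nh × Bool)) : ℝ) =
      ((1 - 1 / (Nh : ℝ)) + (1 / (Nh : ℝ)) * Real.cosh (t / (Ns : ℝ))) ^ Ns) ∧
    (∑ ω : (Fin Ns → Fin Nh × Bool) × (Fin Ns → Fin Nh × Bool), (thRho ω) ^ 2) /
        (Fintype.card ((Fin Ns → Fin Nh × Bool) × (Fin Ns → Fin Nh × Bool)) : ℝ) =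
      1 / ((Ns * Nh : ℕ) : ℝ) := by
  have hNsR : (0:ℝ) < (Ns:ℝ) := by exact_mod_cast hNs
  have hNhR : (0:ℝ) < (Nh:ℝ) := by exact_mod_cast hNh
  have hb : (1:ℝ)/(Ns:ℝ) ≠ 0 := by positivity
  have hbpos : (0:ℝ) < 1/(Ns:ℝ) := by positivity
  have hc : -(1/(Ns:ℝ)) ≠ 1/(Ns:ℝ) := by intro hh; nlinarith
  have hc0 : (0:ℝ) ≠ -(1/(Ns:ℝ)) := by intro hh; nlinarith
  have hi : ∀ ω : (Fin Ns → Fin Nh × Bool) × (Fin Ns → Fin Nh × Bool),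
      thRho ω = ∑ m : Fin Ns, thRhoBlock ω m := by
    intro ω
    unfold thRho thRhoBlock
    exact Fintype.sum_prod_type _
  have hblock := fun (ω : (Fin Ns → Fin Nh × Bool) × (Fin Ns → Fin Nh × Bool))
    (m : Fin Ns) => thRhoBlock_eq ω m
  have hCbR : ((Fintype.card ((Fin Nh × Bool) × (Fin Nh × Bool)) : ℕ) : ℝ)
      = (2*(Nh:ℝ))*(2*(Nh:ℝ)) := by
    simp [Fintype.card_prod, Fintype.card_bool, Fintype.card_fin]
    ring
  have hcardR : ((Fintype.card ((Fin Ns → Fin Nh × Bool) × (Fin Ns → Fin Nh × Bool)) : ℕ) : ℝ)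
      = ((Fintype.card ((Fin Nh × Bool) × (Fin Nh × Bool)) : ℕ) : ℝ) ^ Ns := by
    rw [cardPair]; push_cast; ring
  set Cb : ℝ := ((Fintype.card ((Fin Nh × Bool) × (Fin Nh × Bool)) : ℕ) : ℝ) with hCbdef
  have hCbpos : 0 < Cb := by rw [hCbR]; positivity
  have hpow : Cb ^ Ns = Cb ^ (Ns - 1) * Cb := by
    rw [← pow_succ, Nat.sub_add_cancel hNs]
  have hApos : (0:ℝ) < Cb ^ (Ns - 1) := by positivity
  -- sums over a single slot-pair
  have hmean0 : ∑ z : (Fin Nh × Bool) × (Fin Nh × Bool), thPhi Ns Nh z = 0 := by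
    have h := sumPhi Ns Nh (fun x => x)
    rw [h]; ring
  have hSq : ∑ z : (Fin Nh × Bool) × (Fin Nh × Bool), thPhi Ns Nh z * thPhi Ns Nh z
      = 4*(Nh:ℝ)/(Ns:ℝ)^2 := by
    have h := sumPhi Ns Nh (fun x => x*x)
    rw [h]; ring
  -- generic counting lemma
  have count : ∀ (m : Fin Ns) (v : ℝ),
      ((Nat.card {ω : (Fin Ns → Fin Nh × Bool) × (Fin Ns → Fin Nh × Bool) //
          thRhoBlock ω m = v} : ℕ) : ℝ)
      = Cb ^ (Ns - 1) * ∑ z : (Fin Nh × Bool) × (Fin Nh × Bool),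
          (if thPhi Ns Nh z = v then (1:ℝ) else 0) := by
    intro m v
    rw [Nat.card_eq_fintype_card, Fintype.card_subtype, ← Finset.sum_boole]
    simp only [hblock]
    have step := sum_pair_eq (Ns := Ns) (Nh := Nh)
      (fun h => if thPhi Ns Nh (h m) = v then (1:ℝ) else 0)
    simp only [] at step
    rw [step]
    have oc := oneCoord m (fun z => if thPhi Ns Nh z = v then (1:ℝ) else 0)
    rw [oc, hCbdef]
  refine ⟨hi, ?_, ?_, ?_⟩
  · -- part (ii)
    intro m
    refine ⟨?_, ?_, ?_⟩
    · rw [count m (-(1/(Ns:ℝ)))]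
      have hS : ∑ z : (Fin Nh × Bool) × (Fin Nh × Bool),
          (if thPhi Ns Nh z = -(1/(Ns:ℝ)) then (1:ℝ) else 0) = 2*(Nh:ℝ) := by
        have h := sumPhi Ns Nh (fun x => if x = -(1/(Ns:ℝ)) then (1:ℝ) else 0)
        simp only [] at h
        rw [h, if_neg (Ne.symm hc), if_neg hc0]
        norm_num
        ring
      rw [hS, hcardR, hpow, hCbR]
      field_simp
    · rw [count m 0]
      have hS : ∑ z : (Fin Nh × Bool) × (Fin Nh × Bool),
          (if thPhi Ns Nh z = 0 then (1:ℝ) else 0) = 4*(Nh:ℝ)*((Nh:ℝ)-1) := by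
        have h := sumPhi Ns Nh (fun x => if x = (0:ℝ) then (1:ℝ) else 0)
        simp only [] at h
        rw [h, if_neg hb, if_neg (fun hh => hc0 hh.symm)]
        norm_num
        ring
      rw [hS, hcardR, hpow, hCbR]
      field_simp
      ring
    · rw [count m (1/(Ns:ℝ))]
      have hS : ∑ z : (Fin Nh × Bool) × (Fin Nh × Bool),
          (if thPhi Ns Nh z = 1/(Ns:ℝ) then (1:ℝ) else 0) = 2*(Nh:ℝ) := by
        have h := sumPhi Ns Nh (fun x => if x = 1/(Ns:ℝ) then (1:ℝ) else 0)
        simp only [] at h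
        rw [h, if_neg hc, if_neg (Ne.symm hb)]
        norm_num
        ring
      rw [hS, hcardR, hpow, hCbR]
      field_simp
  · -- part (iii)
    intro t
    have hnum : (∑ ω : (Fin Ns → Fin Nh × Bool) × (Fin Ns → Fin Nh × Bool),
        Real.exp (t * thRho ω))
        = (∑ z : (Fin Nh × Bool) × (Fin Nh × Bool), Real.exp (t * thPhi Ns Nh z)) ^ Ns := by
      calc (∑ ω : (Fin Ns → Fin Nh × Bool) × (Fin Ns → Fin Nh × Bool), Real.exp (t * thRho ω))
          = ∑ ω : (Fin Ns → Fin Nh × Bool) × (Fin Ns → Fin Nh × Bool),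
            ∏ m : Fin Ns, Real.exp (t * thPhi Ns Nh (ω.1 m, ω.2 m)) := by
            refine Finset.sum_congr rfl fun ω _ => ?_
            rw [hi ω, Finset.mul_sum, Real.exp_sum]
            exact Finset.prod_congr rfl fun m _ => by rw [hblock]
        _ = ∑ h : Fin Ns → (Fin Nh × Bool) × (Fin Nh × Bool),
            ∏ m : Fin Ns, Real.exp (t * thPhi Ns Nh (h m)) :=
            sum_pair_eq (fun h => ∏ m : Fin Ns, Real.exp (t * thPhi Ns Nh (h m)))
        _ = ∏ m : Fin Ns, ∑ z : (Fin Nh × Bool) × (Fin Nh × Bool),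
            Real.exp (t * thPhi Ns Nh z) :=
            keyL (fun m z => Real.exp (t * thPhi Ns Nh z))
        _ = (∑ z : (Fin Nh × Bool) × (Fin Nh × Bool), Real.exp (t * thPhi Ns Nh z)) ^ Ns := by
            rw [Finset.prod_const, Finset.card_univ, Fintype.card_fin]
    have hS : ∑ z : (Fin Nh × Bool) × (Fin Nh × Bool), Real.exp (t * thPhi Ns Nh z)
        = (Nh:ℝ) * ((2 * Real.exp (t/(Ns:ℝ)) + 2 * Real.exp (-(t/(Ns:ℝ))))
          + ((Nh:ℝ) - 1) * 4) := by
      have h := sumPhi Ns Nh (fun x => Real.exp (t*x))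
      rw [h, mul_one_div, mul_neg, mul_one_div, mul_zero, Real.exp_zero]
      ring
    rw [hnum, hS, hcardR, ← div_pow]
    congr 1
    rw [Real.cosh_eq, hCbR]
    field_simp
    ring
  · -- part (iv)
    have hnum : (∑ ω : (Fin Ns → Fin Nh × Bool) × (Fin Ns → Fin Nh × Bool), (thRho ω) ^ 2)
        = (Ns:ℝ) * (Cb ^ (Ns - 1) * (4*(Nh:ℝ)/(Ns:ℝ)^2)) := by
      calc (∑ ω : (Fin Ns → Fin Nh × Bool) × (Fin Ns → Fin Nh × Bool), (thRho ω) ^ 2)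
          = ∑ ω : (Fin Ns → Fin Nh × Bool) × (Fin Ns → Fin Nh × Bool),
            (∑ m : Fin Ns, thPhi Ns Nh (ω.1 m, ω.2 m)) ^ 2 := by
            refine Finset.sum_congr rfl fun ω _ => ?_
            rw [hi ω]
            congr 1
            exact Finset.sum_congr rfl fun m _ => hblock ω m
        _ = ∑ h : Fin Ns → (Fin Nh × Bool) × (Fin Nh × Bool),
            (∑ m : Fin Ns, thPhi Ns Nh (h m)) ^ 2 :=
            sum_pair_eq (fun h => (∑ m : Fin Ns, thPhi Ns Nh (h m)) ^ 2)
        _ = ∑ h : Fin Ns → (Fin Nh × Bool) × (Fin Nh × Bool),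
            ∑ m : Fin Ns, ∑ m' : Fin Ns, thPhi Ns Nh (h m) * thPhi Ns Nh (h m') := by
            refine Finset.sum_congr rfl fun h _ => ?_
            rw [pow_two, Finset.sum_mul_sum]
        _ = ∑ m : Fin Ns, ∑ h : Fin Ns → (Fin Nh × Bool) × (Fin Nh × Bool),
            ∑ m' : Fin Ns, thPhi Ns Nh (h m) * thPhi Ns Nh (h m') := Finset.sum_comm
        _ = ∑ m : Fin Ns, ∑ m' : Fin Ns,
            ∑ h : Fin Ns → (Fin Nh × Bool) × (Fin Nh × Bool),
            thPhi Ns Nh (h m) * thPhi Ns Nh (h m') :=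
            Finset.sum_congr rfl fun m _ => Finset.sum_comm
        _ = ∑ m : Fin Ns, ∑ m' : Fin Ns,
            (if m = m' then Cb ^ (Ns - 1) * (4*(Nh:ℝ)/(Ns:ℝ)^2) else 0) := by
            refine Finset.sum_congr rfl fun m _ => Finset.sum_congr rfl fun m' _ => ?_
            by_cases hmm : m = m'
            · subst hmm
              rw [if_pos rfl, ← hSq]
              exact oneCoord m (fun z => thPhi Ns Nh z * thPhi Ns Nh z)
            · rw [if_neg hmm]
              exact crossZero hmm (thPhi Ns Nh) (thPhi Ns Nh) hmean0
        _ = ∑ m : Fin Ns, Cb ^ (Ns - 1) * (4*(Nh:ℝ)/(Ns:ℝ)^2) := by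
            refine Finset.sum_congr rfl fun m _ => ?_
            rw [Finset.sum_ite_eq]
            simp
        _ = (Ns:ℝ) * (Cb ^ (Ns - 1) * (4*(Nh:ℝ)/(Ns:ℝ)^2)) := by
            rw [Finset.sum_const, Finset.card_univ, Fintype.card_fin, nsmul_eq_mul]
    rw [hnum, hcardR, hpow, hCbR]
    push_cast
    field_simp
    ring
end

section
/- Fix β > 0 and an integer N_s ≥ 1. For each N_h let N = N_s·N_h, K = ⌊βN⌋, let s₁,…,s_K be i.i.d. (N_s,N_h)-sequences, and set ρ_{1k} = s₁ᵀs_k and ς_N = Σ_{k=2}^{K} ρ_{1k}². Then N_s²·ς_N converges in distribution, as N_h → ∞, to a Poisson distribution with mean βN_s²; equivalently, the characteristic function of ς_N converges pointwise to exp( βN_s² ( e^{it/N_s²} − 1 ) ). -/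
/-- Cross-correlation `s₁ᵀs₂` of two `(N_s,N_h)`-sequences. -/
noncomputable def thDot {Ns Nh : ℕ} (f g : Fin Ns → Fin Nh × Bool) : ℝ :=
  ∑ p : Fin Ns × Fin Nh, thSeq f p * thSeq g p

/-- The total interference power `ς = Σ_{k=2}^{K} (s₁ᵀs_k)²` seen by user 1: the sample
point consists of user 1's sequence together with the `K−1` interfering sequences, all
i.i.d. uniform `(N_s,N_h)`-sequences. -/
noncomputable def interfPower {Ns Nh K' : ℕ}
    (ω : (Fin Ns → Fin Nh × Bool) × (Fin K' → Fin Ns → Fin Nh × Bool)) : ℝ :=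
  ∑ k : Fin K', (thDot ω.1 (ω.2 k)) ^ 2

section AuxPoisson
open Finset Complex Filter

lemma tendsto_pow_exp_aux {φ : ℕ → ℂ} {K : ℕ → ℕ} {L : ℂ}
    (h1 : Tendsto (fun n => (K n : ℂ) * (φ n - 1)) atTop (nhds L))
    (h2 : Tendsto (fun n => (K n : ℝ) * ‖φ n - 1‖ ^ 2) atTop (nhds 0))
    (h0 : Tendsto (fun n => φ n - 1) atTop (nhds 0)) :
    Tendsto (fun n => φ n ^ K n) atTop (nhds (Complex.exp L)) := by
  have hsmall : ∀ᶠ n in atTop, ‖φ n - 1‖ < 1/2 := by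
    have := h0.norm
    simp only [norm_zero] at this
    exact this.eventually_lt_const (by norm_num)
  have hrem : Tendsto (fun n => (K n : ℂ) * (Complex.log (φ n) - (φ n - 1))) atTop (nhds 0) := by
    apply squeeze_zero_norm' ?_ h2
    filter_upwards [hsmall] with n hn
    have h1' : ‖φ n - 1‖ < 1 := lt_of_lt_of_le hn (by norm_num)
    have hb := Complex.norm_log_one_add_sub_self_le h1'
    rw [add_sub_cancel] at hb
    have hinv : (1 - ‖φ n - 1‖)⁻¹ ≤ 2 := by
      rw [inv_le_comm₀ (by linarith) (by norm_num)]
      linarith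
    have : ‖Complex.log (φ n) - (φ n - 1)‖ ≤ ‖φ n - 1‖ ^ 2 := by
      calc ‖Complex.log (φ n) - (φ n - 1)‖ ≤ ‖φ n - 1‖ ^ 2 * (1 - ‖φ n - 1‖)⁻¹ / 2 := hb
        _ ≤ ‖φ n - 1‖ ^ 2 * 2 / 2 := by
            apply div_le_div_of_nonneg_right ?_ (by norm_num)
            exact mul_le_mul_of_nonneg_left hinv (by positivity)
        _ = ‖φ n - 1‖ ^ 2 := by ring
    calc ‖(K n : ℂ) * (Complex.log (φ n) - (φ n - 1))‖
        = (K n : ℝ) * ‖Complex.log (φ n) - (φ n - 1)‖ := by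
          rw [norm_mul, Complex.norm_natCast]
      _ ≤ (K n : ℝ) * ‖φ n - 1‖ ^ 2 := by
          exact mul_le_mul_of_nonneg_left this (Nat.cast_nonneg _)
  have key : Tendsto (fun n => (K n : ℂ) * Complex.log (φ n)) atTop (nhds L) := by
    have := h1.add hrem
    rw [add_zero] at this
    refine this.congr fun n => by ring
  have := (Complex.continuous_exp.tendsto L).comp key
  refine this.congr' ?_
  filter_upwards [hsmall] with n hn
  have hφ : φ n ≠ 0 := by
    intro h
    rw [h] at hn
    simp at hn
    norm_num at hn
  simp only [Function.comp]
  rw [Complex.exp_nat_mul, Complex.exp_log hφ]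

open Finset Complex

/-- sign of a Bool -/
def sg (b : Bool) : ℝ := if b then 1 else -1

lemma thSeq_eq {Ns Nh : ℕ} (f : Fin Ns → Fin Nh × Bool) (p : Fin Ns × Fin Nh) :
    thSeq f p = (if (f p.1).1 = p.2 then sg (f p.1).2 else 0) / Real.sqrt (Ns : ℝ) := by
  unfold thSeq sg
  split_ifs <;> simp

lemma thDot_eq {Ns Nh : ℕ} (hNs : 1 ≤ Ns) (f g : Fin Ns → Fin Nh × Bool) :
    thDot f g
      = (∑ b, if (f b).1 = (g b).1 then sg (f b).2 * sg (g b).2 else 0) / (Ns : ℝ) := by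
  have hNs0 : (0:ℝ) < Ns := by exact_mod_cast hNs
  unfold thDot
  simp only [thSeq_eq, div_mul_div_comm, Real.mul_self_sqrt (le_of_lt hNs0),
    ite_zero_mul_ite_zero]
  rw [Fintype.sum_prod_type, Finset.sum_div]
  refine Finset.sum_congr rfl fun b _ => ?_
  rw [Finset.sum_eq_single ((f b).1)]
  · by_cases h : (f b).1 = (g b).1
    · rw [if_pos ⟨rfl, h.symm⟩, if_pos h]
    · rw [if_neg (fun hh => h hh.2.symm), if_neg h, zero_div]
  · intro j _ hj
    rw [if_neg (fun hh => hj hh.1.symm), zero_div]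
  · intro h
    exact absurd (Finset.mem_univ _) h

/-- the transfer map -/
def Tmap {Ns Nh : ℕ} (f : Fin Ns → Fin Nh × Bool) (i₀ : Fin Nh)
    (h : Fin Ns → Fin Nh × Bool) : Fin Ns → Fin Nh × Bool :=
  fun b => (Equiv.swap (f b).1 i₀ ((h b).1), (f b).2 == (h b).2)

lemma Tmap_invol {Ns Nh : ℕ} (f : Fin Ns → Fin Nh × Bool) (i₀ : Fin Nh) :
    Function.Involutive (Tmap f i₀) := by
  intro h
  funext b
  unfold Tmap
  refine Prod.ext ?_ ?_
  · simp [Equiv.swap_apply_self]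
  · simp only
    cases (f b).2 <;> cases (h b).2 <;> rfl

lemma thDot_Tmap {Ns Nh : ℕ} (hNs : 1 ≤ Ns) (f : Fin Ns → Fin Nh × Bool) (i₀ : Fin Nh)
    (h : Fin Ns → Fin Nh × Bool) :
    thDot (fun _ => (i₀, true)) (Tmap f i₀ h) = thDot f h := by
  rw [thDot_eq hNs, thDot_eq hNs]
  congr 1
  refine Finset.sum_congr rfl fun b _ => ?_
  unfold Tmap
  simp only
  have hc : (i₀ = Equiv.swap (f b).1 i₀ ((h b).1)) ↔ ((f b).1 = (h b).1) := by
    constructor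
    · intro hh
      have : Equiv.swap (f b).1 i₀ ((f b).1) = Equiv.swap (f b).1 i₀ ((h b).1) := by
        rw [Equiv.swap_apply_left]; exact hh
      exact (Equiv.injective _ this)
    · intro hh
      rw [← hh, Equiv.swap_apply_left]
  by_cases hp : (f b).1 = (h b).1
  · rw [if_pos (hc.mpr hp), if_pos hp]
    cases hf : (f b).2 <;> cases hh : (h b).2 <;> simp [sg]
  · rw [if_neg (fun hh => hp (hc.mp hh)), if_neg hp]

lemma sum_thDot_invariant {Ns Nh : ℕ} (hNs : 1 ≤ Ns) (i₀ : Fin Nh)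
    (f : Fin Ns → Fin Nh × Bool) (F : ℝ → ℂ) :
    ∑ h : Fin Ns → Fin Nh × Bool, F (thDot f h)
      = ∑ h : Fin Ns → Fin Nh × Bool, F (thDot (fun _ => (i₀, true)) h) := by
  refine Fintype.sum_bijective (Tmap f i₀) (Tmap_invol f i₀).bijective _ _ fun h => ?_
  rw [thDot_Tmap hNs]

section
variable {Ns Nh : ℕ} (i₀ : Fin Nh)

/-- match count -/
def Mcnt (h : Fin Ns → Fin Nh × Bool) : Finset (Fin Ns) :=
  univ.filter fun b => (h b).1 = i₀

lemma count_match : ∑ x : Fin Nh × Bool, (if x.1 = i₀ then (1:ℝ) else 0) = 2 := by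
  rw [Fintype.sum_prod_type]
  rw [Finset.sum_congr rfl (fun j _ => by
    split_ifs with hj <;> simp [hj] :
      ∀ j ∈ univ, ∑ s : Bool, (if (j, s).1 = i₀ then (1:ℝ) else 0)
        = (if j = i₀ then (2:ℝ) else 0))]
  simp [Finset.sum_ite_eq']

lemma count_nonmatch (hNh : 1 ≤ Nh) :
    ∑ x : Fin Nh × Bool, (if x.1 = i₀ then (0:ℝ) else 1) = 2*((Nh:ℝ)-1) := by
  have h1 : ∀ x : Fin Nh × Bool, (if x.1 = i₀ then (0:ℝ) else 1)
      = 1 - (if x.1 = i₀ then (1:ℝ) else 0) := by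
    intro x; split_ifs <;> norm_num
  rw [Finset.sum_congr rfl fun x _ => h1 x, Finset.sum_sub_distrib, count_match]
  simp [Fintype.card_prod]
  ring

end

section
variable {Ns Nh : ℕ} (i₀ : Fin Nh)

lemma sum_XX (hNh : 1 ≤ Nh) {b b' : Fin Ns} (hbb : b ≠ b') :
    ∑ h : Fin Ns → Fin Nh × Bool,
      ((if (h b).1 = i₀ then (1:ℝ) else 0) * (if (h b').1 = i₀ then (1:ℝ) else 0))
      = (Fintype.card (Fin Ns → Fin Nh × Bool) : ℝ) / (Nh:ℝ)^2 := by
  have hNh0 : (0:ℝ) < Nh := by exact_mod_cast hNh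
  have hNs2 : 2 ≤ Ns := by
    by_contra hlt
    push_neg at hlt
    interval_cases Ns
    · exact b.elim0
    · exact hbb (Fin.ext (by omega))
  have hb'mem : b' ∈ univ.erase b := Finset.mem_erase.mpr ⟨Ne.symm hbb, mem_univ _⟩
  set u : Fin Ns → (Fin Nh × Bool) → ℝ :=
    fun c x => if c = b ∨ c = b' then (if x.1 = i₀ then (1:ℝ) else 0) else 1 with hu
  have step1 : ∀ h : Fin Ns → Fin Nh × Bool,
      (if (h b).1 = i₀ then (1:ℝ) else 0) * (if (h b').1 = i₀ then (1:ℝ) else 0)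
        = ∏ c, u c (h c) := by
    intro h
    rw [← Finset.mul_prod_erase univ (fun c => u c (h c)) (mem_univ b),
        ← Finset.mul_prod_erase _ _ hb'mem]
    have hrest : ∏ c ∈ (univ.erase b).erase b', u c (h c) = 1 :=
      Finset.prod_eq_one (fun c hc => by
        rw [Finset.mem_erase, Finset.mem_erase] at hc
        simp only [hu]
        exact if_neg (by push_neg; exact ⟨hc.2.1, hc.1⟩))
    rw [hrest, mul_one]
    simp only [hu, if_pos (Or.inl rfl), if_pos (Or.inr rfl)]
  rw [Finset.sum_congr rfl fun h _ => step1 h, ← Fintype.prod_sum]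
  have step2 : ∀ c ∈ univ, ∑ x : Fin Nh × Bool, u c x
      = if c = b ∨ c = b' then (2:ℝ) else 2*Nh := by
    intro c _
    by_cases hc : c = b ∨ c = b'
    · simp only [hu, if_pos hc]
      exact count_match i₀
    · simp only [hu, if_neg hc]
      simp [Finset.sum_const, Finset.card_univ, Fintype.card_prod, mul_comm]
  rw [Finset.prod_congr rfl step2]
  have hcard : ((univ.erase b).erase b').card = Ns - 2 := by
    rw [Finset.card_erase_of_mem hb'mem, Finset.card_erase_of_mem (mem_univ _),
      Finset.card_univ, Fintype.card_fin]
    omega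
  have hprod : ∏ c : Fin Ns, (if c = b ∨ c = b' then (2:ℝ) else 2*Nh)
      = 2 * (2 * (2*(Nh:ℝ))^(Ns-2)) := by
    rw [← Finset.mul_prod_erase univ _ (mem_univ b), ← Finset.mul_prod_erase _ _ hb'mem,
      if_pos (Or.inl rfl), if_pos (Or.inr rfl)]
    congr 2
    calc ∏ c ∈ (univ.erase b).erase b', (if c = b ∨ c = b' then (2:ℝ) else 2*Nh)
        = ∏ _c ∈ (univ.erase b).erase b', (2*(Nh:ℝ)) := Finset.prod_congr rfl (fun c hc => by
          rw [Finset.mem_erase, Finset.mem_erase] at hc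
          rw [if_neg (by push_neg; exact ⟨hc.2.1, hc.1⟩)])
      _ = (2*(Nh:ℝ))^(Ns-2) := by rw [Finset.prod_const, hcard]
  rw [hprod]
  have hcardH : (Fintype.card (Fin Ns → Fin Nh × Bool) : ℝ) = (2*(Nh:ℝ))^Ns := by
    simp [Fintype.card_fun, Fintype.card_prod]
    norm_cast
    ring
  rw [hcardH]
  have hdecomp : (2*(Nh:ℝ))^Ns = (2*(Nh:ℝ))^(Ns-2) * (2*(Nh:ℝ))^2 := by
    rw [← pow_add, Nat.sub_add_cancel hNs2]
  rw [hdecomp]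
  field_simp


lemma sum_indicator_M1 (hNs : 1 ≤ Ns) (hNh : 1 ≤ Nh) :
    ∑ h : Fin Ns → Fin Nh × Bool, (if (Mcnt i₀ h).card = 1 then (1:ℝ) else 0)
      = (Fintype.card (Fin Ns → Fin Nh × Bool) : ℝ) *
        ((Ns:ℝ)/Nh * (((Nh:ℝ)-1)/Nh)^(Ns-1)) := by
  classical
  have hNh0 : (0:ℝ) < Nh := by exact_mod_cast hNh
  have stepA : ∀ h : Fin Ns → Fin Nh × Bool, (if (Mcnt i₀ h).card = 1 then (1:ℝ) else 0)
      = ∑ b : Fin Ns, (if Mcnt i₀ h = {b} then (1:ℝ) else 0) := by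
    intro h
    by_cases hc : (Mcnt i₀ h).card = 1
    · obtain ⟨b₀, hb⟩ := Finset.card_eq_one.mp hc
      have hsum : ∑ b : Fin Ns, (if Mcnt i₀ h = {b} then (1:ℝ) else 0) = 1 := by
        rw [Finset.sum_eq_single b₀]
        · rw [if_pos hb]
        · intro b _ hbne
          exact if_neg (fun he => hbne (Finset.singleton_inj.mp (hb.symm.trans he)).symm)
        · intro hne; exact absurd (mem_univ _) hne
      rw [if_pos hc, hsum]
    · rw [if_neg hc]
      exact (Finset.sum_eq_zero fun b _ =>
        if_neg fun he => hc (by rw [he]; exact Finset.card_singleton b)).symm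
  have stepB : ∀ (b : Fin Ns) (h : Fin Ns → Fin Nh × Bool),
      (if Mcnt i₀ h = {b} then (1:ℝ) else 0)
        = ∏ c : Fin Ns, (if ((h c).1 = i₀ ↔ c = b) then (1:ℝ) else 0) := by
    intro b h
    have hcond : (Mcnt i₀ h = {b}) ↔ ∀ c ∈ univ, ((h c).1 = i₀ ↔ c = b) := by
      rw [Finset.ext_iff]
      unfold Mcnt
      simp
    rw [Finset.prod_boole]
    by_cases hM : Mcnt i₀ h = {b}
    · rw [if_pos hM, if_pos (hcond.mp hM)]
    · rw [if_neg hM, if_neg (fun hh => hM (hcond.mpr hh))]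
  have stepD : ∀ b : Fin Ns, ∑ h : Fin Ns → Fin Nh × Bool,
      (if Mcnt i₀ h = {b} then (1:ℝ) else 0) = 2*(2*((Nh:ℝ)-1))^(Ns-1) := by
    intro b
    set v : Fin Ns → Fin Nh × Bool → ℝ := fun c x => if (x.1 = i₀ ↔ c = b) then 1 else 0 with hv
    have hB : ∀ h : Fin Ns → Fin Nh × Bool,
        (if Mcnt i₀ h = {b} then (1:ℝ) else 0) = ∏ c, v c (h c) := fun h => stepB b h
    rw [Finset.sum_congr rfl fun h _ => hB h, ← Fintype.prod_sum]
    have step2 : ∀ c ∈ univ, (∑ x : Fin Nh × Bool, v c x)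
        = if c = b then (2:ℝ) else 2*((Nh:ℝ)-1) := by
      intro c _
      simp only [hv]
      by_cases hc : c = b
      · rw [if_pos hc]
        rw [Finset.sum_congr rfl (fun x _ =>
          show (if (x.1 = i₀ ↔ c = b) then (1:ℝ) else 0) = (if x.1 = i₀ then (1:ℝ) else 0) by
            by_cases hx : x.1 = i₀
            · rw [if_pos (by simp [hc, hx]), if_pos hx]
            · rw [if_neg (by simp [hc, hx]), if_neg hx])]
        exact count_match i₀
      · rw [if_neg hc]
        rw [Finset.sum_congr rfl (fun x _ =>
          show (if (x.1 = i₀ ↔ c = b) then (1:ℝ) else 0) = (if x.1 = i₀ then (0:ℝ) else 1) by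
            by_cases hx : x.1 = i₀
            · rw [if_neg (by simp [hc, hx]), if_pos hx]
            · rw [if_pos (by simp [hc, hx]), if_neg hx])]
        exact count_nonmatch i₀ hNh
    rw [Finset.prod_congr rfl step2, ← Finset.mul_prod_erase univ _ (mem_univ b), if_pos rfl]
    congr 1
    calc ∏ c ∈ univ.erase b, (if c = b then (2:ℝ) else 2*((Nh:ℝ)-1))
        = ∏ _c ∈ univ.erase b, (2*((Nh:ℝ)-1)) := Finset.prod_congr rfl (fun c hc => by
          rw [if_neg (Finset.mem_erase.mp hc).1])
      _ = (2*((Nh:ℝ)-1))^(Ns-1) := by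
          rw [Finset.prod_const, Finset.card_erase_of_mem (mem_univ _), Finset.card_univ,
            Fintype.card_fin]
  rw [Finset.sum_congr rfl fun h _ => stepA h, Finset.sum_comm,
    Finset.sum_congr rfl fun b _ => stepD b, Finset.sum_const, Finset.card_univ,
    Fintype.card_fin, nsmul_eq_mul]
  have hcardH : (Fintype.card (Fin Ns → Fin Nh × Bool) : ℝ) = (2*(Nh:ℝ))^Ns := by
    simp [Fintype.card_fun, Fintype.card_prod]
    norm_cast
    ring
  have hsplit : ((2:ℝ)*Nh)^Ns = (2*(Nh:ℝ))^(Ns-1) * (2*(Nh:ℝ)) := by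
    rw [← pow_succ, Nat.sub_add_cancel hNs]
  have hmix : ((2:ℝ)*Nh)^(Ns-1) * (((Nh:ℝ)-1)/Nh)^(Ns-1) = (2*((Nh:ℝ)-1))^(Ns-1) := by
    rw [← mul_pow]
    congr 1
    field_simp
  rw [hcardH, hsplit]
  calc (Ns:ℝ) * (2*(2*((Nh:ℝ)-1))^(Ns-1)) 
      = (Ns:ℝ) * (2*((2*(Nh:ℝ))^(Ns-1) * (((Nh:ℝ)-1)/Nh)^(Ns-1))) := by rw [hmix]
    _ = (2*(Nh:ℝ))^(Ns-1) * (2*(Nh:ℝ)) * ((Ns:ℝ)/Nh * (((Nh:ℝ)-1)/Nh)^(Ns-1)) := by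
        field_simp

end

section
variable {Ns Nh : ℕ} (i₀ : Fin Nh)

lemma thDot_f0 (hNs : 1 ≤ Ns) (h : Fin Ns → Fin Nh × Bool) :
    thDot (fun _ => (i₀, true)) h
      = (∑ b, if (h b).1 = i₀ then sg ((h b).2) else 0) / (Ns : ℝ) := by
  rw [thDot_eq hNs]
  congr 1
  refine Finset.sum_congr rfl fun b _ => ?_
  show (if i₀ = (h b).1 then sg true * sg ((h b).2) else 0) = _
  by_cases hb : (h b).1 = i₀
  · rw [if_pos hb.symm, if_pos hb]
    simp [sg]
  · rw [if_neg (fun he => hb he.symm), if_neg hb]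

lemma dot_M0 (hNs : 1 ≤ Ns) (h : Fin Ns → Fin Nh × Bool) (hM : (Mcnt i₀ h).card = 0) :
    thDot (fun _ => (i₀, true)) h = 0 := by
  rw [thDot_f0 i₀ hNs]
  rw [Finset.sum_eq_zero, zero_div]
  intro b _
  refine if_neg fun hh => ?_
  rw [Finset.card_eq_zero] at hM
  have : b ∈ Mcnt i₀ h := by unfold Mcnt; simp [hh]
  rw [hM] at this
  exact absurd this (Finset.notMem_empty b)

lemma dot_M1 (hNs : 1 ≤ Ns) (h : Fin Ns → Fin Nh × Bool) (hM : (Mcnt i₀ h).card = 1) :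
    (thDot (fun _ => (i₀, true)) h)^2 = 1/(Ns:ℝ)^2 := by
  obtain ⟨b₀, hb⟩ := Finset.card_eq_one.mp hM
  have hb₀ : (h b₀).1 = i₀ := by
    have : b₀ ∈ Mcnt i₀ h := hb ▸ Finset.mem_singleton_self b₀
    unfold Mcnt at this
    simpa using this
  rw [thDot_f0 i₀ hNs]
  have hsum : (∑ b, if (h b).1 = i₀ then sg ((h b).2) else 0) = sg ((h b₀).2) := by
    rw [Finset.sum_eq_single b₀]
    · rw [if_pos hb₀]
    · intro b _ hbne
      refine if_neg fun he => hbne ?_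
      have : b ∈ Mcnt i₀ h := by unfold Mcnt; simp [he]
      rw [hb] at this
      exact Finset.mem_singleton.mp this
    · exact fun hne => absurd (mem_univ _) hne
  rw [hsum, div_pow]
  have : sg ((h b₀).2) ^ 2 = 1 := by cases (h b₀).2 <;> simp [sg]
  rw [this]

lemma perh (hNs : 1 ≤ Ns) (t : ℝ) (h : Fin Ns → Fin Nh × Bool) :
    ‖Complex.exp (Complex.I * t * (((thDot (fun _ => (i₀, true)) h)^2 : ℝ) : ℂ)) - 1
       - (Complex.exp (Complex.I * t / (Ns:ℂ)^2) - 1) *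
          (if (Mcnt i₀ h).card = 1 then 1 else 0)‖
      ≤ ∑ p ∈ univ.offDiag,
          ((if (h p.1).1 = i₀ then (1:ℝ) else 0) * (if (h p.2).1 = i₀ then (1:ℝ) else 0)) * 4 := by
  have hRHSnn : (0:ℝ) ≤ ∑ p ∈ univ.offDiag,
      ((if (h p.1).1 = i₀ then (1:ℝ) else 0) * (if (h p.2).1 = i₀ then (1:ℝ) else 0)) * 4 :=
    Finset.sum_nonneg fun p _ => by positivity
  by_cases h0 : (Mcnt i₀ h).card = 0
  · rw [dot_M0 i₀ hNs h h0, if_neg (by omega), mul_zero, sub_zero]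
    have h00 : Complex.I * t * (((0:ℝ)^2 : ℝ) : ℂ) = 0 := by norm_num
    rw [h00, Complex.exp_zero, sub_self, norm_zero]
    exact hRHSnn
  by_cases h1 : (Mcnt i₀ h).card = 1
  · rw [dot_M1 i₀ hNs h h1, if_pos h1, mul_one]
    have : Complex.I * t * (((1/(Ns:ℝ)^2 : ℝ)) : ℂ) = Complex.I * t / (Ns:ℂ)^2 := by
      push_cast
      ring
    rw [this]
    have hz : Complex.exp (Complex.I * ↑t / (Ns:ℂ)^2) - 1
        - (Complex.exp (Complex.I * ↑t / (Ns:ℂ)^2) - 1) = 0 := by ring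
    rw [hz, norm_zero]
    exact hRHSnn
  · have h2 : 2 ≤ (Mcnt i₀ h).card := by omega
    rw [if_neg h1, mul_zero, sub_zero]
    have hn1 : ‖Complex.exp (Complex.I * t * (((thDot (fun _ => (i₀, true)) h)^2 : ℝ) : ℂ))‖
        = 1 := by
      have : Complex.I * t * (((thDot (fun _ => (i₀, true)) h)^2 : ℝ) : ℂ)
          = ((t * (thDot (fun _ => (i₀, true)) h)^2 : ℝ) : ℂ) * Complex.I := by
        push_cast
        ring
      rw [this]
      exact Complex.norm_exp_ofReal_mul_I _
    have hle2 : ‖Complex.exp (Complex.I * t * (((thDot (fun _ => (i₀, true)) h)^2 : ℝ) : ℂ)) - 1‖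
        ≤ 2 := by
      calc _ ≤ ‖Complex.exp (Complex.I * t * (((thDot (fun _ => (i₀, true)) h)^2 : ℝ) : ℂ))‖
            + ‖(1:ℂ)‖ := norm_sub_le _ _
        _ ≤ 2 := by rw [hn1]; norm_num
    obtain ⟨a, ha, b, hb, hab⟩ := Finset.one_lt_card.mp h2
    have hmem : (a, b) ∈ (univ : Finset (Fin Ns)).offDiag :=
      Finset.mem_offDiag.mpr ⟨mem_univ _, mem_univ _, hab⟩
    have hamem : (h a).1 = i₀ := by unfold Mcnt at ha; simpa using ha
    have hbmem : (h b).1 = i₀ := by unfold Mcnt at hb; simpa using hb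
    have hterm : ((if (h a).1 = i₀ then (1:ℝ) else 0) * (if (h b).1 = i₀ then (1:ℝ) else 0)) * 4
        = 4 := by rw [if_pos hamem, if_pos hbmem]; norm_num
    have h4le : (4:ℝ) ≤ ∑ p ∈ univ.offDiag,
        ((if (h p.1).1 = i₀ then (1:ℝ) else 0) * (if (h p.2).1 = i₀ then (1:ℝ) else 0)) * 4 := by
      have hs := Finset.single_le_sum (f := fun p : Fin Ns × Fin Ns =>
        ((if (h p.1).1 = i₀ then (1:ℝ) else 0) * (if (h p.2).1 = i₀ then (1:ℝ) else 0)) * 4)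
        (fun p _ => by positivity) hmem
      calc (4:ℝ) = ((if (h a).1 = i₀ then (1:ℝ) else 0) * (if (h b).1 = i₀ then (1:ℝ) else 0)) * 4 :=
            hterm.symm
        _ ≤ _ := hs
    linarith


lemma factorization' {K' : ℕ} (hNs : 1 ≤ Ns) (hNh : 1 ≤ Nh) (t : ℝ) :
    (∑ ω : (Fin Ns → Fin Nh × Bool) × (Fin K' → Fin Ns → Fin Nh × Bool),
        Complex.exp (Complex.I * (t : ℂ) * (interfPower ω : ℂ)))
      / ((Fintype.card ((Fin Ns → Fin Nh × Bool) ×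
          (Fin K' → Fin Ns → Fin Nh × Bool)) : ℕ) : ℂ)
    = ((∑ p : (Fin Ns → Fin Nh × Bool) × (Fin Ns → Fin Nh × Bool),
          Complex.exp (Complex.I * (t : ℂ) * (((thDot p.1 p.2)^2 : ℝ) : ℂ)))
        / ((Fintype.card (Fin Ns → Fin Nh × Bool) : ℂ))^2) ^ K' := by
  classical
  have i₀ : Fin Nh := ⟨0, hNh⟩
  set S : ℂ := ∑ h : Fin Ns → Fin Nh × Bool,
    Complex.exp (Complex.I * (t : ℂ) * (((thDot (fun _ => (i₀, true)) h)^2 : ℝ) : ℂ)) with hS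
  have hcpos : 0 < Fintype.card (Fin Ns → Fin Nh × Bool) :=
    Fintype.card_pos_iff.mpr ⟨fun _ => (i₀, true)⟩
  have hcc : ((Fintype.card (Fin Ns → Fin Nh × Bool) : ℕ) : ℂ) ≠ 0 := by
    exact_mod_cast Nat.cast_ne_zero.mpr hcpos.ne'
  have hexp : ∀ (f : Fin Ns → Fin Nh × Bool) (g : Fin K' → Fin Ns → Fin Nh × Bool),
      Complex.exp (Complex.I * (t : ℂ) * (interfPower (f, g) : ℂ))
        = ∏ k, Complex.exp (Complex.I * (t : ℂ) * (((thDot f (g k))^2 : ℝ) : ℂ)) := by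
    intro f g
    rw [← Complex.exp_sum]
    congr 1
    unfold interfPower
    push_cast
    rw [Finset.mul_sum]
  have hinner : ∀ f : Fin Ns → Fin Nh × Bool,
      (∑ g : Fin K' → Fin Ns → Fin Nh × Bool,
        Complex.exp (Complex.I * (t : ℂ) * (interfPower (f, g) : ℂ))) = S ^ K' := by
    intro f
    rw [Finset.sum_congr rfl fun g _ => hexp f g,
      ← Fintype.sum_pow (fun h => Complex.exp (Complex.I * (t:ℂ) * (((thDot f h)^2 : ℝ) : ℂ))) K',
      sum_thDot_invariant hNs i₀ f (fun x => Complex.exp (Complex.I * (t:ℂ) * ((x^2 : ℝ) : ℂ)))]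
  have hnum : (∑ ω : (Fin Ns → Fin Nh × Bool) × (Fin K' → Fin Ns → Fin Nh × Bool),
      Complex.exp (Complex.I * (t : ℂ) * (interfPower ω : ℂ)))
      = (Fintype.card (Fin Ns → Fin Nh × Bool) : ℂ) * S ^ K' := by
    rw [Fintype.sum_prod_type, Finset.sum_congr rfl fun f _ => hinner f, Finset.sum_const,
      Finset.card_univ, nsmul_eq_mul]
  have hnum2 : (∑ p : (Fin Ns → Fin Nh × Bool) × (Fin Ns → Fin Nh × Bool),
      Complex.exp (Complex.I * (t : ℂ) * (((thDot p.1 p.2)^2 : ℝ) : ℂ)))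
      = (Fintype.card (Fin Ns → Fin Nh × Bool) : ℂ) * S := by
    rw [Fintype.sum_prod_type, Finset.sum_congr rfl fun f _ =>
      sum_thDot_invariant hNs i₀ f (fun x => Complex.exp (Complex.I * (t:ℂ) * ((x^2 : ℝ) : ℂ))),
      Finset.sum_const, Finset.card_univ, nsmul_eq_mul]
  have hcard : ((Fintype.card ((Fin Ns → Fin Nh × Bool) ×
        (Fin K' → Fin Ns → Fin Nh × Bool)) : ℕ) : ℂ)
      = (Fintype.card (Fin Ns → Fin Nh × Bool) : ℂ)
        * ((Fintype.card (Fin Ns → Fin Nh × Bool) : ℂ)) ^ K' := by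
    simp only [Fintype.card_prod, Fintype.card_fun, Fintype.card_fin, pow_mul]
    push_cast
    ring
  rw [hnum, hnum2, hcard, pow_two, mul_div_mul_left _ _ hcc, mul_div_mul_left _ _ hcc, div_pow]

lemma phi_est (hNs : 1 ≤ Ns) (hNh : 1 ≤ Nh) (t : ℝ) :
    ‖(∑ p : (Fin Ns → Fin Nh × Bool) × (Fin Ns → Fin Nh × Bool),
        Complex.exp (Complex.I * (t : ℂ) * (((thDot p.1 p.2)^2 : ℝ) : ℂ)))
       / ((Fintype.card (Fin Ns → Fin Nh × Bool) : ℂ))^2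
      - 1 - (Complex.exp (Complex.I * (t : ℂ) / (Ns:ℂ)^2) - 1) *
          (((Ns:ℝ)/Nh * (((Nh:ℝ)-1)/Nh)^(Ns-1) : ℝ) : ℂ)‖
      ≤ 4*(Ns:ℝ)^2/(Nh:ℝ)^2 := by
  classical
  have i₀ : Fin Nh := ⟨0, hNh⟩
  have hNh0 : (0:ℝ) < Nh := by exact_mod_cast hNh
  set w : ℂ := Complex.exp (Complex.I * (t:ℂ) / (Ns:ℂ)^2) with hw
  set S : ℂ := ∑ h : Fin Ns → Fin Nh × Bool,
    Complex.exp (Complex.I * (t : ℂ) * (((thDot (fun _ => (i₀, true)) h)^2 : ℝ) : ℂ)) with hS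
  have hcpos : 0 < Fintype.card (Fin Ns → Fin Nh × Bool) :=
    Fintype.card_pos_iff.mpr ⟨fun _ => (i₀, true)⟩
  have hcr0 : (0:ℝ) < (Fintype.card (Fin Ns → Fin Nh × Bool) : ℝ) := by exact_mod_cast hcpos
  have hcc : ((Fintype.card (Fin Ns → Fin Nh × Bool)) : ℂ) ≠ 0 := by
    exact_mod_cast Nat.cast_ne_zero.mpr hcpos.ne'
  have hdouble : (∑ p : (Fin Ns → Fin Nh × Bool) × (Fin Ns → Fin Nh × Bool),
      Complex.exp (Complex.I * (t : ℂ) * (((thDot p.1 p.2)^2 : ℝ) : ℂ)))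
      = (Fintype.card (Fin Ns → Fin Nh × Bool) : ℂ) * S := by
    rw [Fintype.sum_prod_type, Finset.sum_congr rfl fun f _ =>
      sum_thDot_invariant hNs i₀ f (fun x => Complex.exp (Complex.I * (t:ℂ) * ((x^2 : ℝ) : ℂ))),
      Finset.sum_const, Finset.card_univ, nsmul_eq_mul]
  set N₁ : ℝ := ∑ h : Fin Ns → Fin Nh × Bool,
    (if (Mcnt i₀ h).card = 1 then (1:ℝ) else 0) with hN₁
  have hq : N₁ = (Fintype.card (Fin Ns → Fin Nh × Bool) : ℝ) *
      ((Ns:ℝ)/Nh * (((Nh:ℝ)-1)/Nh)^(Ns-1)) := sum_indicator_M1 i₀ hNs hNh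
  have hN₁C : ((N₁ : ℝ) : ℂ) = ∑ h : Fin Ns → Fin Nh × Bool,
      (if (Mcnt i₀ h).card = 1 then (1:ℂ) else 0) := by
    rw [hN₁]
    push_cast
    exact Finset.sum_congr rfl fun h _ => by split_ifs <;> simp
  have key : S - (Fintype.card (Fin Ns → Fin Nh × Bool) : ℂ) - (w - 1) * ((N₁ : ℝ) : ℂ)
      = ∑ h : Fin Ns → Fin Nh × Bool,
        (Complex.exp (Complex.I * (t : ℂ) * (((thDot (fun _ => (i₀, true)) h)^2 : ℝ) : ℂ)) - 1
          - (w - 1) * (if (Mcnt i₀ h).card = 1 then 1 else 0)) := by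
    rw [Finset.sum_sub_distrib, Finset.sum_sub_distrib, Finset.sum_const, Finset.card_univ,
      nsmul_eq_mul, mul_one, ← Finset.mul_sum, hN₁C]
  have hE : ‖∑ h : Fin Ns → Fin Nh × Bool,
      (Complex.exp (Complex.I * (t : ℂ) * (((thDot (fun _ => (i₀, true)) h)^2 : ℝ) : ℂ)) - 1
        - (w - 1) * (if (Mcnt i₀ h).card = 1 then 1 else 0))‖
      ≤ 4*(Ns:ℝ)^2/(Nh:ℝ)^2 * (Fintype.card (Fin Ns → Fin Nh × Bool) : ℝ) := by
    calc ‖∑ h : Fin Ns → Fin Nh × Bool,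
        (Complex.exp (Complex.I * (t : ℂ) * (((thDot (fun _ => (i₀, true)) h)^2 : ℝ) : ℂ)) - 1
          - (w - 1) * (if (Mcnt i₀ h).card = 1 then 1 else 0))‖
        ≤ ∑ h : Fin Ns → Fin Nh × Bool,
          ‖Complex.exp (Complex.I * (t : ℂ) * (((thDot (fun _ => (i₀, true)) h)^2 : ℝ) : ℂ)) - 1
            - (w - 1) * (if (Mcnt i₀ h).card = 1 then 1 else 0)‖ := norm_sum_le _ _
      _ ≤ ∑ h : Fin Ns → Fin Nh × Bool, ∑ p ∈ univ.offDiag,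
          ((if (h p.1).1 = i₀ then (1:ℝ) else 0) * (if (h p.2).1 = i₀ then (1:ℝ) else 0)) * 4 :=
          Finset.sum_le_sum fun h _ => perh i₀ hNs t h
      _ = ∑ p ∈ univ.offDiag, (∑ h : Fin Ns → Fin Nh × Bool,
          ((if (h p.1).1 = i₀ then (1:ℝ) else 0) * (if (h p.2).1 = i₀ then (1:ℝ) else 0))) * 4 := by
          rw [Finset.sum_comm]
          exact Finset.sum_congr rfl fun p _ => by rw [← Finset.sum_mul]
      _ = ∑ _p ∈ (univ : Finset (Fin Ns)).offDiag,
          ((Fintype.card (Fin Ns → Fin Nh × Bool) : ℝ) / (Nh:ℝ)^2) * 4 :=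
          Finset.sum_congr rfl fun p hp => by
            rw [sum_XX i₀ hNh (Finset.mem_offDiag.mp hp).2.2]
      _ ≤ 4*(Ns:ℝ)^2/(Nh:ℝ)^2 * (Fintype.card (Fin Ns → Fin Nh × Bool) : ℝ) := by
          rw [Finset.sum_const, nsmul_eq_mul, Finset.offDiag_card, Finset.card_univ,
            Fintype.card_fin]
          have hcard_le : ((Ns * Ns - Ns : ℕ) : ℝ) ≤ (Ns:ℝ)^2 := by
            have h1 : (Ns * Ns - Ns : ℕ) ≤ Ns * Ns := Nat.sub_le _ _
            calc ((Ns * Ns - Ns : ℕ) : ℝ) ≤ ((Ns * Ns : ℕ) : ℝ) := by exact_mod_cast h1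
              _ = (Ns:ℝ)^2 := by push_cast; ring
          have hnn : (0:ℝ) ≤ (Fintype.card (Fin Ns → Fin Nh × Bool) : ℝ) / (Nh:ℝ)^2 * 4 := by
            positivity
          calc ((Ns * Ns - Ns : ℕ) : ℝ) *
                ((Fintype.card (Fin Ns → Fin Nh × Bool) : ℝ) / (Nh:ℝ)^2 * 4)
              ≤ (Ns:ℝ)^2 * ((Fintype.card (Fin Ns → Fin Nh × Bool) : ℝ) / (Nh:ℝ)^2 * 4) :=
                mul_le_mul_of_nonneg_right hcard_le hnn
            _ = 4*(Ns:ℝ)^2/(Nh:ℝ)^2 * (Fintype.card (Fin Ns → Fin Nh × Bool) : ℝ) := by ring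
  have hqc : (((Ns:ℝ)/Nh * (((Nh:ℝ)-1)/Nh)^(Ns-1) : ℝ) : ℂ)
      = ((N₁ : ℝ) : ℂ) / ((Fintype.card (Fin Ns → Fin Nh × Bool)) : ℂ) := by
    rw [hq]
    push_cast
    rw [eq_div_iff hcc]
    ring
  have hgoal : (∑ p : (Fin Ns → Fin Nh × Bool) × (Fin Ns → Fin Nh × Bool),
        Complex.exp (Complex.I * (t : ℂ) * (((thDot p.1 p.2)^2 : ℝ) : ℂ)))
       / ((Fintype.card (Fin Ns → Fin Nh × Bool) : ℂ))^2
      - 1 - (w - 1) * (((Ns:ℝ)/Nh * (((Nh:ℝ)-1)/Nh)^(Ns-1) : ℝ) : ℂ)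
      = (S - (Fintype.card (Fin Ns → Fin Nh × Bool) : ℂ) - (w - 1) * ((N₁ : ℝ) : ℂ))
        / ((Fintype.card (Fin Ns → Fin Nh × Bool)) : ℂ) := by
    rw [hdouble, hqc, pow_two, mul_div_mul_left _ _ hcc, sub_div, sub_div, div_self hcc,
      mul_div_assoc]
  rw [hgoal, norm_div, RCLike.norm_natCast, div_le_iff₀ hcr0, key]
  exact hE

end

end AuxPoisson

/-- Fix `β > 0` and `N_s ≥ 1`.  For each `N_h` let `N = N_s·N_h`,
`K = ⌊βN⌋`, with `K − 1` interfering users.  Then the characteristic function of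
`ς_N = Σ_{k=2}^K (s₁ᵀs_k)²` converges pointwise, as `N_h → ∞`, to
`exp(βN_s²(e^{it/N_s²} − 1))`; equivalently `N_s²·ς_N` converges in distribution to a
Poisson law with mean `βN_s²`. -/
theorem interference_power_cf_tendsto_poisson (β : ℝ) (hβ : 0 < β) (Ns : ℕ) (hNs : 1 ≤ Ns)
    (t : ℝ) :
    Filter.Tendsto
      (fun Nh : ℕ =>
        (∑ ω : (Fin Ns → Fin Nh × Bool) ×
              (Fin (⌊β * ((Ns * Nh : ℕ) : ℝ)⌋₊ - 1) → Fin Ns → Fin Nh × Bool),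
            Complex.exp (Complex.I * (t : ℂ) * (interfPower ω : ℂ))) /
          ((Fintype.card ((Fin Ns → Fin Nh × Bool) ×
              (Fin (⌊β * ((Ns * Nh : ℕ) : ℝ)⌋₊ - 1) → Fin Ns → Fin Nh × Bool)) : ℕ) : ℂ))
      Filter.atTop
      (nhds (Complex.exp ((β : ℂ) * (Ns : ℂ) ^ 2 *
        (Complex.exp (Complex.I * (t : ℂ) / (Ns : ℂ) ^ 2) - 1)))) := by
  classical
  have hNsR : (1:ℝ) ≤ (Ns:ℝ) := by exact_mod_cast hNs
  have hNsR0 : (0:ℝ) < (Ns:ℝ) := by linarith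
  have hβNs : (0:ℝ) < β * Ns := by positivity
  set w : ℂ := Complex.exp (Complex.I * (t:ℂ) / (Ns:ℂ)^2) with hw
  set K : ℕ → ℕ := fun n => ⌊β * ((Ns * n : ℕ) : ℝ)⌋₊ - 1 with hKdef
  set φ : ℕ → ℂ := fun n => (∑ p : (Fin Ns → Fin n × Bool) × (Fin Ns → Fin n × Bool),
      Complex.exp (Complex.I * (t:ℂ) * (((thDot p.1 p.2)^2 : ℝ) : ℂ)))
      / ((Fintype.card (Fin Ns → Fin n × Bool) : ℂ))^2 with hφdef
  set q : ℕ → ℝ := fun n => (Ns:ℝ)/n * (((n:ℝ)-1)/n)^(Ns-1) with hqdef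
  have hw1 : ‖w‖ = 1 := by
    have harg : Complex.I * (t:ℂ) / (Ns:ℂ)^2 = ((t/(Ns:ℝ)^2 : ℝ) : ℂ) * Complex.I := by
      push_cast
      ring
    rw [hw, harg]
    exact Complex.norm_exp_ofReal_mul_I _
  have hw2 : ‖w - 1‖ ≤ 2 := by
    calc ‖w - 1‖ ≤ ‖w‖ + ‖(1:ℂ)‖ := norm_sub_le _ _
      _ ≤ 2 := by rw [hw1]; norm_num
  have hqbound : ∀ n : ℕ, 1 ≤ n → 0 ≤ q n ∧ q n ≤ (Ns:ℝ)/n := by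
    intro n hn
    have hn0 : (0:ℝ) < n := by exact_mod_cast hn
    have hn1 : (1:ℝ) ≤ (n:ℝ) := by exact_mod_cast hn
    have hr0 : (0:ℝ) ≤ ((n:ℝ)-1)/n := div_nonneg (by linarith) hn0.le
    have hr1 : ((n:ℝ)-1)/n ≤ 1 := (div_le_one hn0).mpr (by linarith)
    constructor
    · rw [hqdef]
      exact mul_nonneg (by positivity) (pow_nonneg hr0 _)
    · rw [hqdef]
      calc (Ns:ℝ)/n * (((n:ℝ)-1)/n)^(Ns-1) ≤ (Ns:ℝ)/n * 1 :=
          mul_le_mul_of_nonneg_left (pow_le_one₀ hr0 hr1) (by positivity)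
        _ = (Ns:ℝ)/n := mul_one _
  have hest : ∀ n : ℕ, 1 ≤ n → ‖φ n - 1 - (w - 1) * ((q n : ℝ) : ℂ)‖ ≤ 4*(Ns:ℝ)^2/(n:ℝ)^2 :=
    fun n hn => phi_est hNs hn t
  have hφ1bound : ∀ n : ℕ, 1 ≤ n → ‖φ n - 1‖ ≤ (2*(Ns:ℝ) + 4*(Ns:ℝ)^2)/n := by
    intro n hn
    have hn0 : (0:ℝ) < n := by exact_mod_cast hn
    have hn1 : (1:ℝ) ≤ (n:ℝ) := by exact_mod_cast hn
    obtain ⟨hq0, hq1⟩ := hqbound n hn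
    have ht1 : ‖φ n - 1‖ ≤ ‖φ n - 1 - (w - 1) * ((q n : ℝ) : ℂ)‖ + ‖(w - 1) * ((q n : ℝ) : ℂ)‖ := by
      calc ‖φ n - 1‖ = ‖(φ n - 1 - (w - 1) * ((q n : ℝ) : ℂ)) + (w - 1) * ((q n : ℝ) : ℂ)‖ := by
            rw [sub_add_cancel]
        _ ≤ _ := norm_add_le _ _
    have ht2 : ‖(w - 1) * ((q n : ℝ) : ℂ)‖ ≤ 2 * ((Ns:ℝ)/n) := by
      rw [norm_mul, Complex.norm_real, Real.norm_of_nonneg hq0]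
      exact mul_le_mul hw2 hq1 hq0 (by norm_num)
    have ht3 : 4*(Ns:ℝ)^2/(n:ℝ)^2 ≤ 4*(Ns:ℝ)^2/(n:ℝ) := by
      apply div_le_div_of_nonneg_left (by positivity) hn0
      nlinarith
    have := ht1.trans (add_le_add (hest n hn) ht2)
    calc ‖φ n - 1‖ ≤ 4*(Ns:ℝ)^2/(n:ℝ)^2 + 2 * ((Ns:ℝ)/n) := this
      _ ≤ 4*(Ns:ℝ)^2/(n:ℝ) + 2 * ((Ns:ℝ)/n) := by linarith
      _ = (2*(Ns:ℝ) + 4*(Ns:ℝ)^2)/n := by field_simp; ring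
  have hKle : ∀ n : ℕ, (K n : ℝ) ≤ β * Ns * n := by
    intro n
    calc (K n : ℝ) ≤ ((⌊β * ((Ns * n : ℕ) : ℝ)⌋₊ : ℕ) : ℝ) := by
          have hKn : K n ≤ ⌊β * ((Ns * n : ℕ) : ℝ)⌋₊ := Nat.sub_le _ _
          exact_mod_cast hKn
      _ ≤ β * ((Ns * n : ℕ) : ℝ) := Nat.floor_le (by positivity)
      _ = β * Ns * n := by push_cast; ring
  have h0 : Filter.Tendsto (fun n => φ n - 1) Filter.atTop (nhds 0) := by
    apply squeeze_zero_norm' ?_ (tendsto_const_div_atTop_nhds_zero_nat (2*(Ns:ℝ) + 4*(Ns:ℝ)^2))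
    filter_upwards [Filter.eventually_ge_atTop 1] with n hn
    exact hφ1bound n hn
  have h2 : Filter.Tendsto (fun n => (K n : ℝ) * ‖φ n - 1‖ ^ 2) Filter.atTop (nhds 0) := by
    apply squeeze_zero' (Filter.Eventually.of_forall fun n => by positivity)
      ?_ (tendsto_const_div_atTop_nhds_zero_nat (β * Ns * (2*(Ns:ℝ) + 4*(Ns:ℝ)^2)^2))
    filter_upwards [Filter.eventually_ge_atTop 1] with n hn
    have hn0 : (0:ℝ) < n := by exact_mod_cast hn
    have hK0 : (0:ℝ) ≤ (K n : ℝ) := Nat.cast_nonneg _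
    have hb := hφ1bound n hn
    calc (K n : ℝ) * ‖φ n - 1‖ ^ 2
        ≤ (β * Ns * n) * (((2*(Ns:ℝ) + 4*(Ns:ℝ)^2)/n) ^ 2) := by
          apply mul_le_mul (hKle n) ?_ (by positivity) (by positivity)
          exact pow_le_pow_left₀ (norm_nonneg _) hb 2
      _ = β * Ns * (2*(Ns:ℝ) + 4*(Ns:ℝ)^2)^2 / n := by
          field_simp
  have hKq : Filter.Tendsto (fun n => (K n : ℝ) * q n) Filter.atTop (nhds (β * (Ns:ℝ)^2)) := by
    have harg : ∀ n : ℕ, β * ((Ns * n : ℕ) : ℝ) = (β * Ns) * (n:ℝ) := fun n => by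
      push_cast; ring
    have hfloor_atTop : Filter.Tendsto (fun n : ℕ => ⌊(β * Ns) * (n:ℝ)⌋₊)
        Filter.atTop Filter.atTop := tendsto_nat_floor_mul_atTop (β * Ns) hβNs
    have hev : ∀ᶠ n : ℕ in Filter.atTop, 1 ≤ ⌊(β * Ns) * (n:ℝ)⌋₊ :=
      hfloor_atTop.eventually_ge_atTop 1
    have T0 : Filter.Tendsto (fun n : ℕ => (⌊(β * Ns) * (n:ℝ)⌋₊ : ℝ)/(n:ℝ))
        Filter.atTop (nhds (β * Ns)) :=
      (tendsto_nat_floor_mul_div_atTop hβNs.le).comp tendsto_natCast_atTop_atTop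
    have Tinv : Filter.Tendsto (fun n : ℕ => 1/(n:ℝ)) Filter.atTop (nhds 0) :=
      tendsto_one_div_atTop_nhds_zero_nat
    have T1 : Filter.Tendsto (fun n : ℕ => (K n : ℝ)/(n:ℝ)) Filter.atTop (nhds (β * Ns)) := by
      have hsub := T0.sub Tinv
      rw [sub_zero] at hsub
      refine hsub.congr' ?_
      filter_upwards [hev] with n hn
      rw [hKdef]
      show (⌊(β * Ns) * (n:ℝ)⌋₊ : ℝ)/(n:ℝ) - 1/(n:ℝ)
        = ((⌊β * ((Ns * n : ℕ) : ℝ)⌋₊ - 1 : ℕ) : ℝ)/(n:ℝ)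
      rw [harg n, Nat.cast_sub hn, Nat.cast_one, sub_div]
    have Tr : Filter.Tendsto (fun n : ℕ => ((n:ℝ)-1)/(n:ℝ)) Filter.atTop (nhds 1) := by
      have hsub := (tendsto_const_nhds (x := (1:ℝ)) (f := (Filter.atTop : Filter ℕ))).sub Tinv
      rw [sub_zero] at hsub
      refine hsub.congr' ?_
      filter_upwards [Filter.eventually_ge_atTop 1] with n hn
      have hn0 : (n:ℝ) ≠ 0 := by
        have : (0:ℝ) < n := by exact_mod_cast hn
        exact this.ne'
      field_simp
    have T2 : Filter.Tendsto (fun n : ℕ => (((n:ℝ)-1)/(n:ℝ))^(Ns-1))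
        Filter.atTop (nhds 1) := by
      have := Tr.pow (Ns-1)
      simpa using this
    have T3 := T1.mul ((tendsto_const_nhds (x := (Ns:ℝ))).mul T2)
    have hval : (β * Ns) * ((Ns:ℝ) * 1) = β * (Ns:ℝ)^2 := by ring
    rw [hval] at T3
    refine T3.congr fun n => ?_
    rw [hqdef]
    ring
  have h1 : Filter.Tendsto (fun n => (K n : ℂ) * (φ n - 1)) Filter.atTop
      (nhds ((β : ℂ) * (Ns : ℂ)^2 * (w - 1))) := by
    have A : Filter.Tendsto (fun n => (((K n : ℝ) * q n : ℝ) : ℂ)) Filter.atTop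
        (nhds ((β * (Ns:ℝ)^2 : ℝ) : ℂ)) := by
      exact (Complex.continuous_ofReal.tendsto _).comp hKq
    have A' := A.mul_const (w - 1)
    have B : Filter.Tendsto (fun n => (K n : ℂ) * (φ n - 1) - (((K n : ℝ) * q n : ℝ) : ℂ) * (w - 1))
        Filter.atTop (nhds 0) := by
      apply squeeze_zero_norm' ?_ (tendsto_const_div_atTop_nhds_zero_nat (β * Ns * (4*(Ns:ℝ)^2)))
      filter_upwards [Filter.eventually_ge_atTop 1] with n hn
      have hn0 : (0:ℝ) < n := by exact_mod_cast hn
      have hcast : (K n : ℂ) * (φ n - 1) - (((K n : ℝ) * q n : ℝ) : ℂ) * (w - 1)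
          = (K n : ℂ) * (φ n - 1 - (w - 1) * ((q n : ℝ) : ℂ)) := by
        push_cast
        ring
      rw [hcast, norm_mul, Complex.norm_natCast]
      calc (K n : ℝ) * ‖φ n - 1 - (w - 1) * ((q n : ℝ) : ℂ)‖
          ≤ (β * Ns * n) * (4*(Ns:ℝ)^2/(n:ℝ)^2) := by
            apply mul_le_mul (hKle n) (hest n hn) (norm_nonneg _) (by positivity)
        _ = β * Ns * (4*(Ns:ℝ)^2) / n := by
            field_simp
    have hadd := B.add A'
    rw [zero_add] at hadd
    have hval : ((β * (Ns:ℝ)^2 : ℝ) : ℂ) * (w - 1) = (β : ℂ) * (Ns : ℂ)^2 * (w - 1) := by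
      push_cast
      ring
    rw [hval] at hadd
    refine hadd.congr fun n => ?_
    ring
  have hmain := tendsto_pow_exp_aux h1 h2 h0
  refine hmain.congr' ?_
  filter_upwards [Filter.eventually_ge_atTop 1] with n hn
  exact (factorization' hNs hn t).symm
end

section
/- Let S ∈ ℝ^{N×K} be a matrix whose k-th column is s_k = ε_k e_{π_k} for some signs ε_k ∈ {−1,+1} and indices π_k ∈ {1,…,N} (a TH matrix realization with N_s = 1), let η ≥ 0 and α > 0, and define the linear receiver Wᵀ = Sᵀ(η SSᵀ + α I)^{−1} (SUMF for η = 0, MMSE for η = 1, α = 1/γ, and decorrelator in the limit η = 1, α → 0⁺). Then the effective channel matrix G = WᵀS satisfies G_{ij} = ρ_{ij}/(α + η v_i) for all i, j, and the noise covariance factor satisfies (WᵀW)_{ij} = ρ_{ij}/(α + η v_i)², where ρ_{ij} = s_iᵀs_j ∈ {−1,0,1} and v_i = #{k ≤ K : π_k = π_i} = Σ_{k=1}^K |ρ_{ik}|. -/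
/-!
Every column of `S` is a signed standard basis vector, so `SSᵀ` is the diagonal matrix of
support counts and the receiver matrix `ηSSᵀ + αI` is diagonal with positive entries
`α + η·#{k | π k = n}`. For a diagonal `D`, the entry `(Sᵀ D S)_ij` only sees the coordinate
`π_i`, giving `ρ_ij · D_{π_i}`; both `WᵀS = Sᵀ D⁻¹ S` and `WᵀW = Sᵀ D⁻² S` are of this form.
-/

open Matrix

def thMatrix {N K : ℕ} (π : Fin K → Fin N) (ε : Fin K → ℝ) :
    Matrix (Fin N) (Fin K) ℝ :=
  fun i k => if π k = i then ε k else 0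

def colDot {N K : ℕ} (S : Matrix (Fin N) (Fin K) ℝ) (i j : Fin K) : ℝ :=
  ∑ n : Fin N, S n i * S n j

def suppCount {N K : ℕ} (π : Fin K → Fin N) (i : Fin K) : ℕ :=
  (Finset.univ.filter fun k => π k = π i).card

namespace Matrix

variable {n m K : Type*} [Fintype n] [DecidableEq n]

theorem inv_diagonal_of_ne_zero [Field K] {v : n → K} (hv : ∀ i, v i ≠ 0) :
    (diagonal v)⁻¹ = diagonal fun i => (v i)⁻¹ := by
  refine inv_eq_right_inv ?_
  rw [diagonal_mul_diagonal, ← diagonal_one]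
  exact congrArg diagonal (funext fun i => mul_inv_cancel₀ (hv i))

theorem mul_diagonal_mul_transpose_mul_diagonal [CommRing K] (A : Matrix m n K) (w : n → K) :
    A * diagonal w * (A * diagonal w)ᵀ = A * diagonal (fun i => w i ^ 2) * Aᵀ := by
  rw [transpose_mul, diagonal_transpose, Matrix.mul_assoc, ← Matrix.mul_assoc (diagonal w),
    diagonal_mul_diagonal, ← Matrix.mul_assoc]
  simp only [sq]

end Matrix

section thMatrix

variable {N K : ℕ} (π : Fin K → Fin N) (ε : Fin K → ℝ)

theorem colDot_thMatrix (i j : Fin K) :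
    colDot (thMatrix π ε) i j = if π j = π i then ε i * ε j else 0 := by
  unfold colDot thMatrix
  rw [Finset.sum_eq_single (π i) (fun n _ hn => by simp [Ne.symm hn]) (by simp)]
  by_cases h : π j = π i <;> simp [h]

theorem transpose_thMatrix_mul_diagonal_mul_thMatrix_apply (w : Fin N → ℝ) (i j : Fin K) :
    ((thMatrix π ε)ᵀ * diagonal w * thMatrix π ε) i j =
      colDot (thMatrix π ε) i j * w (π i) := by
  simp only [mul_apply, transpose_apply, thMatrix]
  rw [Finset.sum_eq_single (π i) (fun n _ hn => by simp [Ne.symm hn]) (by simp),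
    colDot_thMatrix]
  by_cases h : π j = π i <;> simp [h]
  ring

variable {π ε}

theorem thMatrix_mul_transpose (hε : ∀ k, ε k ^ 2 = 1) :
    thMatrix π ε * (thMatrix π ε)ᵀ =
      diagonal fun n => ((Finset.univ.filter fun k => π k = n).card : ℝ) := by
  ext n m
  simp only [mul_apply, transpose_apply, thMatrix, diagonal_apply, Finset.card_filter,
    Nat.cast_sum, Nat.cast_ite, Nat.cast_one, Nat.cast_zero]
  split_ifs with hnm
  · subst hnm
    refine Finset.sum_congr rfl fun k _ => ?_
    split_ifs <;> simp [← sq, hε]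
  · refine Finset.sum_eq_zero fun k _ => ?_
    split_ifs with h1 h2 <;> simp_all

theorem abs_colDot_thMatrix (hε : ∀ k, |ε k| = 1) (i j : Fin K) :
    |colDot (thMatrix π ε) i j| = if π j = π i then 1 else 0 := by
  rw [colDot_thMatrix]
  split_ifs <;> simp [abs_mul, hε]

theorem colDot_thMatrix_mem (hε : ∀ k, ε k = 1 ∨ ε k = -1) (i j : Fin K) :
    colDot (thMatrix π ε) i j = 0 ∨ colDot (thMatrix π ε) i j = 1 ∨
      colDot (thMatrix π ε) i j = -1 := by
  rw [colDot_thMatrix]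
  split_ifs
  · rcases hε i with hi | hi <;> rcases hε j with hj | hj <;> simp [hi, hj]
  · exact Or.inl rfl

theorem suppCount_eq_sum_abs_colDot (hε : ∀ k, |ε k| = 1) (i : Fin K) :
    (suppCount π i : ℝ) = ∑ k : Fin K, |colDot (thMatrix π ε) i k| := by
  simp only [abs_colDot_thMatrix hε, suppCount, Finset.card_filter, Nat.cast_sum, Nat.cast_ite,
    Nat.cast_one, Nat.cast_zero]

end thMatrix

/-- Let `S` be an `N×K` TH matrix realization with `N_s = 1` (columns
`ε_k e_{π_k}`), let `η ≥ 0`, `α > 0`, and consider the linear receiver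
`Wᵀ = Sᵀ(η SSᵀ + α I)⁻¹` (SUMF for `η = 0`; MMSE for `η = 1`, `α = 1/γ`; decorrelator in
the limit `η = 1`, `α → 0⁺`).  Then `ρ_ij = s_iᵀs_j ∈ {0, 1, −1}`,
`v_i = #{k : π_k = π_i} = Σ_k |ρ_ik|`, the effective channel `G = WᵀS` satisfies
`G_ij = ρ_ij/(α + η v_i)`, and the noise covariance factor satisfies
`(WᵀW)_ij = ρ_ij/(α + η v_i)²`. -/
theorem linear_receiver_effective_channel (N K : ℕ)
    (π : Fin K → Fin N) (ε : Fin K → ℝ) (hε : ∀ k, ε k = 1 ∨ ε k = -1)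
    (η α : ℝ) (hη : 0 ≤ η) (hα : 0 < α) :
    (∀ i j : Fin K, colDot (thMatrix π ε) i j = 0 ∨ colDot (thMatrix π ε) i j = 1 ∨
        colDot (thMatrix π ε) i j = -1) ∧
    (∀ i : Fin K, (suppCount π i : ℝ) = ∑ k : Fin K, |colDot (thMatrix π ε) i k|) ∧
    (∀ i j : Fin K,
      (((thMatrix π ε)ᵀ *
          (η • (thMatrix π ε * (thMatrix π ε)ᵀ) + α • (1 : Matrix (Fin N) (Fin N) ℝ))⁻¹) *
        thMatrix π ε) i j =
      colDot (thMatrix π ε) i j / (α + η * (suppCount π i : ℝ))) ∧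
    (∀ i j : Fin K,
      (((thMatrix π ε)ᵀ *
          (η • (thMatrix π ε * (thMatrix π ε)ᵀ) + α • (1 : Matrix (Fin N) (Fin N) ℝ))⁻¹) *
        ((thMatrix π ε)ᵀ *
          (η • (thMatrix π ε * (thMatrix π ε)ᵀ) + α • (1 : Matrix (Fin N) (Fin N) ℝ))⁻¹)ᵀ)
        i j =
      colDot (thMatrix π ε) i j / (α + η * (suppCount π i : ℝ)) ^ 2) := by
  have hε_abs : ∀ k, |ε k| = 1 := fun k => by rcases hε k with h | h <;> simp [h]
  have hε_sq : ∀ k, ε k ^ 2 = 1 := fun k => by rw [← sq_abs, hε_abs, one_pow]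
  set D : Fin N → ℝ := fun n => α + η * (Finset.univ.filter fun k => π k = n).card
  have hD : ∀ n, D n ≠ 0 := fun n => by positivity
  have hreceiver : η • (thMatrix π ε * (thMatrix π ε)ᵀ) + α • (1 : Matrix (Fin N) (Fin N) ℝ) =
      diagonal D := by
    rw [thMatrix_mul_transpose hε_sq, smul_one_eq_diagonal, ← diagonal_smul, diagonal_add]
    exact congrArg diagonal (funext fun n => add_comm _ _)
  refine ⟨colDot_thMatrix_mem hε, suppCount_eq_sum_abs_colDot hε_abs, fun i j => ?_,
    fun i j => ?_⟩
  · rw [hreceiver, inv_diagonal_of_ne_zero hD,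
      transpose_thMatrix_mul_diagonal_mul_thMatrix_apply, div_eq_mul_inv]
    rfl
  · rw [hreceiver, inv_diagonal_of_ne_zero hD, mul_diagonal_mul_transpose_mul_diagonal,
      transpose_transpose, transpose_thMatrix_mul_diagonal_mul_thMatrix_apply, div_eq_mul_inv,
      inv_pow]
    rfl
end
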